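/- arXiv:1010.2991 — 10 statements merged into one kernel-verified Lean document; each statement's English description precedes it below -/
import Mathlib

section
/- Let C ⊆ E be a convex set and let U ⊆ E \ {0} be a nonempty set of nonzero vectors. Then ri(conv(U)) \ {0} is nonempty, and for every v ∈ ri(conv(U)) \ {0}, if the intersection ⋂_{u∈U} F⊥(C,u) is nonempty, then ⋂_{u∈U} F⊥(C,u) = F⊥(C,v). -/
open scoped Pointwise RealInnerProductSpace

variable {E : Type*} [NormedAddCommGroup E] [InnerProductSpace ℝ E] [FiniteDimensional ℝ E]

/-- `F` is a face of the convex set `C`: a convex subset of `C` such that whenever an open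
segment between two points of `C` meets `F`, both endpoints belong to `F`. -/
def IsFace (C F : Set E) : Prop :=
  Convex ℝ F ∧ F ⊆ C ∧
    ∀ x ∈ C, ∀ y ∈ C, (openSegment ℝ x y ∩ F).Nonempty → x ∈ F ∧ y ∈ F

/-- The exposed face `F⊥(C,u)` of `C` by the vector `u`: the points of `C` where `⟨u,·⟩`
attains its supremum over `C`. -/
def expFace (C : Set E) (u : E) : Set E :=
  {x ∈ C | ∀ y ∈ C, ⟪u, y⟫ ≤ ⟪u, x⟫}

/-- `F` is an exposed face of `C`: either `∅`, or `C`, or `F⊥(C,u)` for some nonzero `u`. -/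
def IsExpFace (C F : Set E) : Prop :=
  F = ∅ ∨ F = C ∨ ∃ u : E, u ≠ 0 ∧ F = expFace C u

/-- The normal cone `N(C,x)` of `C` at the point `x`. -/
def normalCone (C : Set E) (x : E) : Set E :=
  {u | ∀ y ∈ C, ⟪u, y - x⟫ ≤ 0}

/-- The normal cone `N(C,F)` of `C` at a subset `F`; for a nonempty convex `F ⊆ C` it agrees
with `normalCone C x` for any `x` in the relative interior of `F` (all these coincide), and
for `F = ∅` it is all of `E`. -/
def normalConeOf (C F : Set E) : Set E :=
  ⋂ x ∈ intrinsicInterior ℝ F, normalCone C x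

/-- `N` is a normal cone of `C`: the normal cone of some face of `C`. -/
def IsNormalCone (C N : Set E) : Prop :=
  ∃ F, IsFace C F ∧ N = normalConeOf C F

/-- `T` is a touching cone of `C`: a nonempty face of a normal cone of `C`. -/
def IsTouchingCone (C T : Set E) : Prop :=
  T.Nonempty ∧ ∃ N, IsNormalCone C N ∧ IsFace N T

/-- The positive hull of a set: all finite nonnegative combinations (`posHull ∅ = {0}`). -/
def posHull (S : Set E) : Set E :=
  {x | ∃ (k : ℕ) (c : Fin k → ℝ) (s : Fin k → E),
    (∀ i, 0 ≤ c i) ∧ (∀ i, s i ∈ S) ∧ x = ∑ i, c i • s i}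

/-- A vector `u` is sharp normal for `C` if every `x ∈ ri(F⊥(C,u))` satisfies
`u ∈ ri(N(C,x))`. -/
def SharpNormal (C : Set E) (u : E) : Prop :=
  ∀ x ∈ intrinsicInterior ℝ (expFace C u), u ∈ intrinsicInterior ℝ (normalCone C x)

/-- A point `x` is sharp exposed in `C` if every nonzero `u ∈ ri(N(C,x))` satisfies
`x ∈ ri(F⊥(C,u))`. -/
def SharpExposed (C : Set E) (x : E) : Prop :=
  ∀ u ∈ intrinsicInterior ℝ (normalCone C x), u ≠ 0 → x ∈ intrinsicInterior ℝ (expFace C u)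

/-- The smallest exposed face of `C` containing `F`: the intersection of all exposed faces
of `C` containing `F`. -/
def supExp (C F : Set E) : Set E :=
  ⋂₀ {G | IsExpFace C G ∧ F ⊆ G}

/-- The polar body of `K`. -/
def polarBody (K : Set E) : Set E := {u | ∀ y ∈ K, ⟪u, y⟫ ≤ 1}


omit [FiniteDimensional ℝ E] in
lemma aux_line_mem_intrinsicInterior (S : Set E) {v u : E}
    (hv : v ∈ intrinsicInterior ℝ S) (hu : u ∈ S) :
    ∃ δ > (0:ℝ), ∀ t : ℝ, |t - 1| < δ → (1 - t) • u + t • v ∈ intrinsicInterior ℝ S := by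
  obtain ⟨y, hy, rfl⟩ := hv
  have hmem : ∀ t : ℝ, (1 - t) • u + t • (y : E) ∈ affineSpan ℝ S := by
    intro t
    have := AffineMap.lineMap_mem (k := ℝ) t (subset_affineSpan ℝ S hu) y.2
    rwa [AffineMap.lineMap_apply_module] at this
  set f : ℝ → affineSpan ℝ S := fun t => ⟨(1 - t) • u + t • (y : E), hmem t⟩ with hf
  have hcont : Continuous f := by
    apply Continuous.subtype_mk
    fun_prop
  have h1 : f 1 ∈ interior ((↑) ⁻¹' S : Set <| affineSpan ℝ S) := by
    have : f 1 = y := by ext; simp [hf]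
    rwa [this]
  have hopen : IsOpen (f ⁻¹' interior ((↑) ⁻¹' S : Set <| affineSpan ℝ S)) :=
    isOpen_interior.preimage hcont
  obtain ⟨δ, hδ, hball⟩ := Metric.isOpen_iff.mp hopen 1 h1
  refine ⟨δ, hδ, fun t ht => ?_⟩
  have : f t ∈ interior ((↑) ⁻¹' S : Set <| affineSpan ℝ S) := by
    apply hball
    rwa [Metric.mem_ball, Real.dist_eq]
  exact ⟨f t, this, rfl⟩

omit [FiniteDimensional ℝ E] in
lemma aux_hull_max (C : Set E) {U' : Set E} {x : E}
    (hx : ∀ u ∈ U', ∀ y ∈ C, ⟪u, y⟫ ≤ ⟪u, x⟫) : ∀ w ∈ convexHull ℝ U', ∀ y ∈ C, ⟪w, y⟫ ≤ ⟪w, x⟫ := by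
  intro w hw
  have hsub : convexHull ℝ U' ⊆ {w : E | ∀ y ∈ C, ⟪w, y⟫ ≤ ⟪w, x⟫} := by
    apply convexHull_min
    · exact hx
    · intro w1 h1 w2 h2 a b ha hb hab y hy
      have e1 := h1 y hy
      have e2 := h2 y hy
      simp only [inner_add_left, real_inner_smul_left]
      nlinarith
  exact hsub hw

/-- For a convex set `C` and a nonempty set `U` of nonzero vectors,
`ri(conv U) \ {0}` is nonempty, and for every `v` in it, if `⋂_{u∈U} F⊥(C,u)`
is nonempty then it equals `F⊥(C,v)`. -/
theorem stmt_0 (C : Set E) (hC : Convex ℝ C) (U : Set E) (hU : U.Nonempty) (hU0 : 0 ∉ U) :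
    (intrinsicInterior ℝ (convexHull ℝ U) \ {0}).Nonempty ∧
    ∀ v ∈ intrinsicInterior ℝ (convexHull ℝ U) \ {0},
      (⋂ u ∈ U, expFace C u).Nonempty →
      (⋂ u ∈ U, expFace C u) = expFace C v := by
    classical
  have hhull : Convex ℝ (convexHull ℝ U) := convex_convexHull ℝ U
  have hUsub : U ⊆ convexHull ℝ U := subset_convexHull ℝ U
  obtain ⟨u₀, hu₀⟩ := hU
  have hu₀0 : u₀ ≠ 0 := fun h => hU0 (h ▸ hu₀)
  obtain ⟨v₀, hv₀⟩ := Set.Nonempty.intrinsicInterior hhull ⟨u₀, hUsub hu₀⟩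
  constructor
  · by_cases h0 : v₀ = 0
    · obtain ⟨δ, hδ, hkey⟩ := aux_line_mem_intrinsicInterior _ hv₀ (hUsub hu₀)
      set t : ℝ := 1 - min δ 1 / 2 with htdef
      have habs : |t - 1| < δ := by
        rw [htdef, show (1 - min δ 1 / 2 - 1 : ℝ) = -(min δ 1 / 2) by ring, abs_neg,
          abs_of_nonneg (by positivity)]
        have := min_le_left δ 1
        linarith
      refine ⟨(1 - t) • u₀ + t • v₀, hkey t habs, ?_⟩
      subst h0
      simp only [smul_zero, add_zero, Set.mem_singleton_iff]
      have h1t : (1 - t : ℝ) ≠ 0 := by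
        have h01 : (0:ℝ) < min δ 1 := lt_min hδ one_pos
        rw [htdef]; intro h; simp at h; linarith
      exact smul_ne_zero h1t hu₀0
    · exact ⟨v₀, hv₀, h0⟩
  · rintro v ⟨hv, -⟩ ⟨x₀, hx₀⟩
    simp only [Set.mem_iInter] at hx₀
    have hx₀C : x₀ ∈ C := (hx₀ u₀ hu₀).1
    have hx₀max : ∀ u ∈ U, ∀ y ∈ C, ⟪u, y⟫ ≤ ⟪u, x₀⟫ := fun u hu => (hx₀ u hu).2
    have hA := aux_hull_max C hx₀max
    have hvhull : v ∈ convexHull ℝ U := intrinsicInterior_subset hv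
    ext x
    simp only [Set.mem_iInter]
    constructor
    · intro hx
      have hxC : x ∈ C := (hx u₀ hu₀).1
      exact ⟨hxC, aux_hull_max C (fun u hu => (hx u hu).2) v hvhull⟩
    · rintro ⟨hxC, hxmax⟩ u hu
      obtain ⟨δ, hδ, hkey⟩ := aux_line_mem_intrinsicInterior _ hv (hUsub hu)
      set t : ℝ := 1 + min δ 1 / 2 with htdef
      have h01 : (0:ℝ) < min δ 1 := lt_min hδ one_pos
      have habs : |t - 1| < δ := by
        rw [htdef, show (1 + min δ 1 / 2 - 1 : ℝ) = min δ 1 / 2 by ring,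
          abs_of_nonneg (by positivity)]
        have := min_le_left δ 1
        linarith
      have hwhull : (1 - t) • u + t • v ∈ convexHull ℝ U :=
        intrinsicInterior_subset (hkey t habs)
      have h1 : ⟪(1 - t) • u + t • v, x⟫ ≤ ⟪(1 - t) • u + t • v, x₀⟫ :=
        hA _ hwhull x hxC
      have h2 : ⟪u, x⟫ ≤ ⟪u, x₀⟫ := hx₀max u hu x hxC
      have h3 : ⟪v, x₀⟫ ≤ ⟪v, x⟫ := hxmax x₀ hx₀C
      have ht1 : (1:ℝ) < t := by rw [htdef]; linarith
      simp only [inner_add_left, real_inner_smul_left] at h1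
      have hueq : ⟪u, x⟫ = ⟪u, x₀⟫ := le_antisymm h2 (by nlinarith)
      exact ⟨hxC, fun y hy => (hx₀max u hu y hy).trans_eq hueq.symm⟩
end

section
/- Let H ⊆ E be an affine hyperplane with 0 ∉ H and let C ⊆ H be a convex set. Then the map F ↦ pos(F) is a bijection from the set of faces of C onto the set of nonempty faces of pos(C), with inverse given by G ↦ G ∩ C. -/
open scoped Pointwise RealInnerProductSpace

variable {E : Type*} [NormedAddCommGroup E] [InnerProductSpace ℝ E] [FiniteDimensional ℝ E]

/-! Dehomogenization: a linear functional `ℓ` equal to `1` on `C` splits every nonzero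
`x ∈ pos(C)` as `x = ℓ x • a` with `a = (ℓ x)⁻¹ • x ∈ C`. Along this splitting, segments of
`pos(C)` through a point of `pos(F)` rescale to segments of `C` through a point of `F`, which
transports faces of `C` to faces of `pos(C)`. Conversely a nonempty face of the cone `pos(C)`
contains `0` and is closed under nonnegative scaling, so it is the positive hull of its
slice at height `1`. -/

section

omit [FiniteDimensional ℝ E]

lemma zero_mem_posHull (S : Set E) : (0 : E) ∈ posHull S :=
  ⟨0, Fin.elim0, Fin.elim0, fun i => i.elim0, fun i => i.elim0, by simp⟩

lemma smul_mem_posHull_of_mem {S : Set E} {t : ℝ} (ht : 0 ≤ t) {x : E} (hx : x ∈ S) :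
    t • x ∈ posHull S :=
  ⟨1, fun _ => t, fun _ => x, fun _ => ht, fun _ => hx, by simp⟩

lemma subset_posHull (S : Set E) : S ⊆ posHull S := fun x hx => by
  simpa using smul_mem_posHull_of_mem zero_le_one hx

lemma posHull_mono {S T : Set E} (h : S ⊆ T) : posHull S ⊆ posHull T := by
  rintro x ⟨k, c, s, hc, hs, rfl⟩
  exact ⟨k, c, s, hc, fun i => h (hs i), rfl⟩

lemma smul_mem_posHull {S : Set E} {t : ℝ} (ht : 0 ≤ t) {x : E} (hx : x ∈ posHull S) :
    t • x ∈ posHull S := by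
  obtain ⟨k, c, s, hc, hs, rfl⟩ := hx
  refine ⟨k, fun i => t * c i, s, fun i => mul_nonneg ht (hc i), hs, ?_⟩
  simp only [Finset.smul_sum, smul_smul]

lemma add_mem_posHull {S : Set E} {x y : E} (hx : x ∈ posHull S) (hy : y ∈ posHull S) :
    x + y ∈ posHull S := by
  obtain ⟨k, c, s, hc, hs, rfl⟩ := hx
  obtain ⟨l, d, r, hd, hr, rfl⟩ := hy
  refine ⟨k + l, Fin.append c d, Fin.append s r, Fin.addCases (by simpa) (by simpa),
    Fin.addCases (by simpa) (by simpa), ?_⟩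
  simp [Fin.sum_univ_add]

lemma convex_posHull (S : Set E) : Convex ℝ (posHull S) :=
  fun _ hx _ hy _ _ ha hb _ => add_mem_posHull (smul_mem_posHull ha hx) (smul_mem_posHull hb hy)

lemma mem_posHull_iff_of_convex {S : Set E} (hS : Convex ℝ S) {x : E} :
    x ∈ posHull S ↔ x = 0 ∨ ∃ t : ℝ, 0 < t ∧ ∃ a ∈ S, x = t • a := by
  refine ⟨?_, ?_⟩
  · rintro ⟨k, c, s, hc, hs, rfl⟩
    rcases (Finset.sum_nonneg fun i _ => hc i).eq_or_lt with h0 | hpos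
    · have hz : ∀ i ∈ Finset.univ, c i = 0 :=
        (Finset.sum_eq_zero_iff_of_nonneg fun i _ => hc i).1 h0.symm
      exact .inl (Finset.sum_eq_zero fun i hi => by simp [hz i hi])
    set t := ∑ i, c i
    refine .inr ⟨t, hpos, ∑ i, (c i / t) • s i, ?_, ?_⟩
    · refine hS.sum_mem (fun i _ => div_nonneg (hc i) hpos.le) ?_ fun i _ => hs i
      rw [← Finset.sum_div, div_self hpos.ne']
    · simp only [Finset.smul_sum, smul_smul, mul_div_cancel₀ _ hpos.ne']
  · rintro (rfl | ⟨t, ht, a, ha, rfl⟩)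
    · exact zero_mem_posHull S
    · exact smul_mem_posHull_of_mem ht.le ha

lemma IsFace.inter_of_subset {K G C : Set E} (hG : IsFace K G) (hC : Convex ℝ C)
    (hCK : C ⊆ K) : IsFace C (G ∩ C) := by
  refine ⟨hG.1.inter hC, Set.inter_subset_right, fun x hx y hy ⟨z, hz, hzG, _⟩ => ?_⟩
  obtain ⟨hxG, hyG⟩ := hG.2.2 x (hCK hx) y (hCK hy) ⟨z, hz, hzG⟩
  exact ⟨⟨hxG, hx⟩, ⟨hyG, hy⟩⟩

lemma IsFace.smul_mem {K G : Set E} (hK : ∀ x ∈ K, ∀ t : ℝ, 0 ≤ t → t • x ∈ K)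
    (hG : IsFace K G) {x : E} (hx : x ∈ G) {t : ℝ} (ht : 0 ≤ t) : t • x ∈ G := by
  obtain ⟨hGconv, hGK, hGext⟩ := hG
  -- for `s > 1`, `x` lies strictly between `0` and `s • x`
  have hsx : ∀ s : ℝ, 1 < s → 0 ∈ G ∧ s • x ∈ G := fun s hs =>
    hGext 0 (by simpa using hK x (hGK hx) 0 le_rfl) (s • x) (hK x (hGK hx) s (by linarith))
      ⟨x, ⟨1 - s⁻¹, s⁻¹, by simp [inv_lt_one_of_one_lt₀ hs], by positivity, by ring,
        by simp [smul_smul, inv_mul_cancel₀ (by positivity : s ≠ 0)]⟩, hx⟩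
  rcases le_or_gt t 1 with ht1 | ht1
  · exact hGconv.smul_mem_of_zero_mem (hsx 2 one_lt_two).1 hx ⟨ht, ht1⟩
  · exact (hsx t ht1).2

section Dehomogenization

variable {ℓ : E →ₗ[ℝ] ℝ} {C : Set E}

lemma mem_posHull_iff_inv_smul_mem (hC : Convex ℝ C) (hℓ : ∀ x ∈ C, ℓ x = 1) {x : E} :
    x ∈ posHull C ↔ x = 0 ∨ 0 < ℓ x ∧ (ℓ x)⁻¹ • x ∈ C := by
  rw [mem_posHull_iff_of_convex hC]
  refine or_congr_right
    ⟨?_, fun ⟨hpos, hx⟩ => ⟨ℓ x, hpos, _, hx, (smul_inv_smul₀ hpos.ne' x).symm⟩⟩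
  rintro ⟨t, ht, a, ha, rfl⟩
  have hℓa : ℓ (t • a) = t := by simp [hℓ a ha]
  rw [hℓa, inv_smul_smul₀ ht.ne']
  exact ⟨ht, ha⟩

lemma posHull_inter_eq (hℓ : ∀ x ∈ C, ℓ x = 1) {F : Set E} (hF : Convex ℝ F) (hFC : F ⊆ C) :
    posHull F ∩ C = F := by
  refine subset_antisymm ?_ fun x hx => ⟨subset_posHull F hx, hFC hx⟩
  rintro x ⟨hxF, hxC⟩
  rcases (mem_posHull_iff_inv_smul_mem hF fun y hy => hℓ y (hFC hy)).1 hxF with rfl | ⟨-, hx⟩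
  · simpa using hℓ 0 hxC
  · simpa [hℓ x hxC] using hx

lemma IsFace.mem_posHull_of_openSegment (hC : Convex ℝ C) (hℓ : ∀ x ∈ C, ℓ x = 1)
    {F : Set E} (hF : IsFace C F) {x y : E} (hx : x ∈ posHull C) (hy : y ∈ posHull C)
    (hxy : (openSegment ℝ x y ∩ posHull F).Nonempty) : x ∈ posHull F := by
  obtain ⟨hFconv, hFC, hFext⟩ := hF
  obtain ⟨z, ⟨a, b, ha, hb, hab, rfl⟩, hz⟩ := hxy
  rcases (mem_posHull_iff_inv_smul_mem hC hℓ).1 hx with rfl | ⟨hℓx, hpC⟩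
  · exact zero_mem_posHull F
  suffices (ℓ x)⁻¹ • x ∈ F by
    simpa [smul_inv_smul₀ hℓx.ne'] using smul_mem_posHull_of_mem hℓx.le this
  have hzF : ∀ {z : E}, z ∈ posHull F → 0 < ℓ z → (ℓ z)⁻¹ • z ∈ F := fun hz hℓz =>
    (((mem_posHull_iff_inv_smul_mem hFconv fun y hy => hℓ y (hFC hy)).1 hz).resolve_left
      fun h => by simp [h] at hℓz).2
  rcases (mem_posHull_iff_inv_smul_mem hC hℓ).1 hy with rfl | ⟨hℓy, hqC⟩
  · have hℓz : 0 < ℓ (a • x + b • (0 : E)) := by simpa using mul_pos ha hℓx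
    convert hzF hz hℓz using 1
    simp [smul_smul, mul_inv_rev, inv_mul_cancel_right₀ ha.ne']
  · have hℓz : ℓ (a • x + b • y) = a * ℓ x + b * ℓ y := by simp
    have hpos : 0 < a * ℓ x + b * ℓ y := by positivity
    -- the point of `F` is a convex combination of the normalized endpoints
    refine (hFext _ hpC _ hqC ⟨_, ⟨a * ℓ x / ℓ (a • x + b • y), b * ℓ y / ℓ (a • x + b • y),
      ?_, ?_, ?_, ?_⟩, hzF hz (hℓz ▸ hpos)⟩).1
    · rw [hℓz]; positivity
    · rw [hℓz]; positivity
    · rw [hℓz]; field_simp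
    · rw [hℓz, smul_add, smul_smul, smul_smul, smul_smul, smul_smul]
      congr 2 <;> field_simp

lemma IsFace.posHull (hC : Convex ℝ C) (hℓ : ∀ x ∈ C, ℓ x = 1) {F : Set E} (hF : IsFace C F) :
    IsFace (posHull C) (posHull F) :=
  ⟨convex_posHull F, posHull_mono hF.2.1, fun x hx y hy hxy =>
    ⟨hF.mem_posHull_of_openSegment hC hℓ hx hy hxy,
      hF.mem_posHull_of_openSegment hC hℓ hy hx (by rwa [openSegment_symm])⟩⟩

lemma posHull_inter_eq_of_isFace (hC : Convex ℝ C) (hℓ : ∀ x ∈ C, ℓ x = 1) {G : Set E}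
    (hG : IsFace (posHull C) G) (hne : G.Nonempty) : posHull (G ∩ C) = G := by
  have hGsmul : ∀ x ∈ G, ∀ t : ℝ, 0 ≤ t → t • x ∈ G := fun x hx t ht =>
    hG.smul_mem (fun y hy s hs => smul_mem_posHull hs hy) hx ht
  obtain ⟨x₀, hx₀⟩ := hne
  ext x
  rw [mem_posHull_iff_inv_smul_mem (hG.1.inter hC) fun y hy => hℓ y hy.2]
  constructor
  · rintro (rfl | ⟨hpos, hxG, -⟩)
    · simpa using hGsmul x₀ hx₀ 0 le_rfl
    · simpa [smul_inv_smul₀ hpos.ne'] using hGsmul _ hxG (ℓ x) hpos.le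
  · intro hx
    exact ((mem_posHull_iff_inv_smul_mem hC hℓ).1 (hG.2.1 hx)).imp_right fun ⟨hpos, hxC⟩ =>
      ⟨hpos, hGsmul x hx _ (inv_nonneg.2 hpos.le), hxC⟩

end Dehomogenization

end

theorem stmt_1_general (w : E) (c : ℝ) (hc : c ≠ 0) (C : Set E) (hC : Convex ℝ C)
    (hCH : C ⊆ {x : E | ⟪w, x⟫ = c}) :
    (∀ F, IsFace C F → IsFace (posHull C) (posHull F) ∧ (posHull F).Nonempty) ∧
    (∀ F, IsFace C F → posHull F ∩ C = F) ∧
    (∀ G, IsFace (posHull C) G → G.Nonempty →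
      IsFace C (G ∩ C) ∧ posHull (G ∩ C) = G) := by
  set ℓ : E →ₗ[ℝ] ℝ := c⁻¹ • innerₗ E w
  have hℓ : ∀ x ∈ C, ℓ x = 1 := fun x hx => by
    simp [ℓ, show ⟪w, x⟫ = c from hCH hx, hc]
  exact ⟨fun F hF => ⟨hF.posHull hC hℓ, 0, zero_mem_posHull F⟩,
    fun F hF => posHull_inter_eq hℓ hF.1 hF.2.1,
    fun G hG hne => ⟨hG.inter_of_subset hC (subset_posHull C),
      posHull_inter_eq_of_isFace hC hℓ hG hne⟩⟩

/-- For a convex set `C` contained in an affine hyperplane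
`H = {x | ⟨w,x⟩ = c}` (with `w ≠ 0`, `c ≠ 0`, so `0 ∉ H`), the map `F ↦ pos(F)` is a
bijection from the faces of `C` onto the nonempty faces of `pos(C)`, with inverse
`G ↦ G ∩ C`. -/
theorem stmt_1 (w : E) (hw : w ≠ 0) (c : ℝ) (hc : c ≠ 0) (C : Set E) (hC : Convex ℝ C)
    (hCH : C ⊆ {x : E | ⟪w, x⟫ = c}) :
    (∀ F, IsFace C F → IsFace (posHull C) (posHull F) ∧ (posHull F).Nonempty) ∧
    (∀ F, IsFace C F → posHull F ∩ C = F) ∧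
    (∀ G, IsFace (posHull C) G → G.Nonempty →
      IsFace C (G ∩ C) ∧ posHull (G ∩ C) = G) :=
  stmt_1_general w c hc C hC hCH
end

section
/- Let C ⊆ E be a convex set, let {F_α}_{α∈I} be a nonempty family of faces of C, choose x_α ∈ ri(F_α) for each α ∈ I, and let z ∈ ri(conv{x_α : α ∈ I}). Then F(C,z) is the supremum of the family in the face lattice: F_α ⊆ F(C,z) for every α ∈ I, and every face of C that contains all F_α contains F(C,z). -/
open scoped Pointwise RealInnerProductSpace

variable {E : Type*} [NormedAddCommGroup E] [InnerProductSpace ℝ E] [FiniteDimensional ℝ E]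

/-!
`F(C,z)` is realised as the set of `y ∈ C` such that the segment from `y` through `z` extends
beyond `z` inside `C`. It is a face because the directions in which one can move from `z`
without leaving `C` form a convex cone, and `z` lies in its relative interior.
A face of `C` that contains a relative interior point of some `D ⊆ C` contains all of `D`.
Applied to `F α` at `x α` this shows `F α ⊆ F(C,z)`; applied to `F(C,z)` at `z`, which lies
in every face containing all `x α`, it gives minimality.
-/

open Set Filter Topology

section IntrinsicInterior

variable {V : Type*} [NormedAddCommGroup V] [NormedSpace ℝ V] {D : Set V} {z : V}

theorem mem_intrinsicInterior_iff_eventually :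
    z ∈ intrinsicInterior ℝ D ↔
      z ∈ affineSpan ℝ D ∧ ∀ᶠ y in 𝓝[affineSpan ℝ D] z, y ∈ D := by
  constructor
  · rintro ⟨z', hz', rfl⟩
    exact ⟨z'.2, (eventually_nhds_subtype_iff _ z' (· ∈ D)).1 (mem_interior_iff_mem_nhds.1 hz')⟩
  · rintro ⟨hz, h⟩
    exact ⟨⟨z, hz⟩, mem_interior_iff_mem_nhds.2
      ((eventually_nhds_subtype_iff _ ⟨z, hz⟩ (· ∈ D)).2 h), rfl⟩

theorem mem_openSegment_add_smul_sub {p : V} {t : ℝ} (ht : 0 < t) :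
    z ∈ openSegment ℝ p (z + t • (z - p)) :=
  ⟨t / (1 + t), 1 / (1 + t), by positivity, by positivity, by field_simp; ring, by
    match_scalars <;> field_simp; ring⟩

theorem exists_add_smul_sub_mem_of_mem_intrinsicInterior {p : V}
    (hz : z ∈ intrinsicInterior ℝ D) (hp : p ∈ D) : ∃ t : ℝ, 0 < t ∧ z + t • (z - p) ∈ D := by
  obtain ⟨hzA, hD⟩ := mem_intrinsicInterior_iff_eventually.1 hz
  have hline : Tendsto (fun t : ℝ => z + t • (z - p)) (𝓝[>] 0) (𝓝[affineSpan ℝ D] z) := by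
    refine tendsto_nhdsWithin_iff.2 ⟨?_, Eventually.of_forall fun t => ?_⟩
    · have : Continuous fun t : ℝ => z + t • (z - p) := by fun_prop
      simpa using this.continuousWithinAt.tendsto (s := Ioi 0) (x := 0)
    · simpa [vsub_eq_sub, vadd_eq_add, add_comm] using
        AffineSubspace.smul_vsub_vadd_mem (affineSpan ℝ D) t hzA (subset_affineSpan ℝ D hp) hzA
  obtain ⟨t, hmem, ht⟩ := ((hline.eventually hD).and self_mem_nhdsWithin).exists
  exact ⟨t, ht, hmem⟩

theorem Convex.openSegment_intrinsicInterior_self_subset_intrinsicInterior (hD : Convex ℝ D)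
    {g w : V} (hg : g ∈ intrinsicInterior ℝ D) (hw : w ∈ D) :
    openSegment ℝ g w ⊆ intrinsicInterior ℝ D := by
  rintro _ ⟨a, b, ha, hb, hab, rfl⟩
  obtain ⟨hgA, hgD⟩ := mem_intrinsicInterior_iff_eventually.1 hg
  set A := affineSpan ℝ D
  have hwA : w ∈ A := subset_affineSpan ℝ D hw
  have hzA : a • g + b • w ∈ A := A.convex hgA hwA ha.le hb.le hab
  refine mem_intrinsicInterior_iff_eventually.2 ⟨hzA, ?_⟩
  -- With `z = a • g + b • w`, each `y` is `a • φ y + b • w`, and `φ y → g` as `y → z`.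
  set φ : V → V := fun y => g + a⁻¹ • (y - (a • g + b • w))
  have hφ : Tendsto φ (𝓝[A] (a • g + b • w)) (𝓝[A] g) := by
    refine tendsto_nhdsWithin_iff.2 ⟨?_, eventually_nhdsWithin_of_forall fun y hy => ?_⟩
    · have : Continuous φ := by fun_prop
      simpa [φ] using this.continuousWithinAt.tendsto (s := A) (x := a • g + b • w)
    · simpa [φ, vsub_eq_sub, vadd_eq_add, add_comm] using
        A.smul_vsub_vadd_mem a⁻¹ hy hzA hgA
  filter_upwards [hφ.eventually hgD] with y hy
  have hy' : a • φ y + b • w = y := by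
    simp only [φ, smul_add, smul_inv_smul₀ ha.ne']
    abel
  exact hy' ▸ hD hy hw ha.le hb.le hab

end IntrinsicInterior

section FeasibleCone

variable {V : Type*} [AddCommGroup V] [Module ℝ V] {C : Set V} {z : V}

noncomputable def feasibleCone (C : Set V) (z : V) : ConvexCone ℝ V :=
  ConvexCone.hull ℝ (-z +ᵥ C)

theorem Convex.mem_feasibleCone (hC : Convex ℝ C) {v : V} :
    v ∈ feasibleCone C z ↔ ∃ t : ℝ, 0 < t ∧ z + t • v ∈ C := by
  rw [feasibleCone, ConvexCone.mem_hull_of_convex (hC.vadd _)]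
  constructor
  · rintro ⟨r, hr, h⟩
    rw [mem_smul_set_iff_inv_smul_mem₀ hr.ne', mem_vadd_set_iff_neg_vadd_mem, neg_neg,
      vadd_eq_add] at h
    exact ⟨r⁻¹, inv_pos.2 hr, h⟩
  · rintro ⟨t, ht, h⟩
    refine ⟨t⁻¹, inv_pos.2 ht, ?_⟩
    rwa [mem_smul_set_iff_inv_smul_mem₀ (inv_ne_zero ht.ne'), inv_inv,
      mem_vadd_set_iff_neg_vadd_mem, neg_neg, vadd_eq_add]

end FeasibleCone

section MinimalFace

variable {V : Type*} [AddCommGroup V] [Module ℝ V] {C : Set V} {z : V}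

/-- The face `F(C,z)`, when `C` is convex and `z ∈ C`. -/
def minimalFace (C : Set V) (z : V) : Set V :=
  {y ∈ C | ∃ t : ℝ, 0 < t ∧ z + t • (z - y) ∈ C}

theorem mem_minimalFace_self (hz : z ∈ C) : z ∈ minimalFace C z :=
  ⟨hz, 1, one_pos, by simpa using hz⟩

theorem minimalFace_subset : minimalFace C z ⊆ C := fun _ hy => hy.1

theorem Convex.convex_minimalFace (hC : Convex ℝ C) : Convex ℝ (minimalFace C z) := by
  rintro y₁ ⟨hy₁, h₁⟩ y₂ ⟨hy₂, h₂⟩ a b ha hb hab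
  refine ⟨hC hy₁ hy₂ ha hb hab, hC.mem_feasibleCone.1 ?_⟩
  have hdir : z - (a • y₁ + b • y₂) = a • (z - y₁) + b • (z - y₂) := by
    obtain rfl : b = 1 - a := eq_sub_of_add_eq' hab
    module
  rw [hdir]
  exact (feasibleCone C z).convex (hC.mem_feasibleCone.2 h₁) (hC.mem_feasibleCone.2 h₂) ha hb hab

theorem Convex.left_mem_minimalFace_of_mem_openSegment (hC : Convex ℝ C) {p q m : V}
    (hp : p ∈ C) (hq : q ∈ C) (hm : m ∈ openSegment ℝ p q) (hmz : m ∈ minimalFace C z) :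
    p ∈ minimalFace C z := by
  obtain ⟨a, b, ha, hb, hab, rfl⟩ := hm
  set K := feasibleCone C z
  have hmK : z - (a • p + b • q) ∈ K := hC.mem_feasibleCone.2 hmz.2
  have hqK : q - z ∈ K := hC.mem_feasibleCone.2 ⟨1, one_pos, by simpa using hq⟩
  -- `a • (z - p) = (z - m) + b • (q - z)` is a positive combination of directions in `K`.
  have hdir : z - p = a⁻¹ • ((z - (a • p + b • q)) + b • (q - z)) := by
    rw [eq_inv_smul_iff₀ ha.ne']
    obtain rfl : b = 1 - a := eq_sub_of_add_eq' hab
    module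
  refine ⟨hp, hC.mem_feasibleCone.1 ?_⟩
  rw [hdir]
  exact K.smul_mem (inv_pos.2 ha) (K.add_mem hmK (K.smul_mem hb hqK))

end MinimalFace

theorem Convex.mem_intrinsicInterior_minimalFace {V : Type*} [NormedAddCommGroup V]
    [NormedSpace ℝ V] [FiniteDimensional ℝ V] {C : Set V} (hC : Convex ℝ C) {z : V} (hz : z ∈ C) :
    z ∈ intrinsicInterior ℝ (minimalFace C z) := by
  have hG := hC.convex_minimalFace (z := z)
  obtain ⟨g, hg⟩ := Set.Nonempty.intrinsicInterior hG ⟨z, mem_minimalFace_self hz⟩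
  obtain ⟨hgC, t, ht, hw⟩ := intrinsicInterior_subset hg
  have hwG : z + t • (z - g) ∈ minimalFace C z := by
    refine ⟨hw, t⁻¹, inv_pos.2 ht, ?_⟩
    have hback : z + t⁻¹ • (z - (z + t • (z - g))) = g := by
      simp [smul_smul, inv_mul_cancel₀ ht.ne']
    rwa [hback]
  exact hG.openSegment_intrinsicInterior_self_subset_intrinsicInterior hg hwG
    (mem_openSegment_add_smul_sub ht)

section Face

variable {V : Type*} [NormedAddCommGroup V] [InnerProductSpace ℝ V]

theorem isFace_minimalFace {C : Set V} (hC : Convex ℝ C) (z : V) : IsFace C (minimalFace C z) :=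
  ⟨hC.convex_minimalFace, minimalFace_subset, fun p hp q hq ⟨_, hm, hmz⟩ =>
    ⟨hC.left_mem_minimalFace_of_mem_openSegment hp hq hm hmz,
      hC.left_mem_minimalFace_of_mem_openSegment hq hp (openSegment_symm ℝ p q ▸ hm) hmz⟩⟩

theorem IsFace.subset_of_mem_intrinsicInterior {C G D : Set V} {z : V} (hG : IsFace C G)
    (hDC : D ⊆ C) (hz : z ∈ intrinsicInterior ℝ D) (hzG : z ∈ G) : D ⊆ G := fun y hy =>
  have ⟨_, ht, hw⟩ := exists_add_smul_sub_mem_of_mem_intrinsicInterior hz hy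
  (hG.2.2 y (hDC hy) _ (hDC hw) ⟨z, mem_openSegment_add_smul_sub ht, hzG⟩).1

end Face

theorem stmt_2_general (C : Set E) (hC : Convex ℝ C) {ι : Type*}
    (F : ι → Set E) (hF : ∀ α, IsFace C (F α)) (x : ι → E)
    (hx : ∀ α, x α ∈ intrinsicInterior ℝ (F α))
    (z : E) (hz : z ∈ intrinsicInterior ℝ (convexHull ℝ (Set.range x))) :
    ∃ G, IsFace C G ∧ z ∈ intrinsicInterior ℝ G ∧
      (∀ α, F α ⊆ G) ∧ ∀ G', IsFace C G' → (∀ α, F α ⊆ G') → G ⊆ G' := by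
  have hxC : ∀ α, x α ∈ C := fun α => (hF α).2.1 (intrinsicInterior_subset (hx α))
  have hhullC : convexHull ℝ (range x) ⊆ C := convexHull_min (range_subset_iff.2 hxC) hC
  have hzC : z ∈ C := hhullC (intrinsicInterior_subset hz)
  have hzG := hC.mem_intrinsicInterior_minimalFace hzC
  refine ⟨minimalFace C z, isFace_minimalFace hC z, hzG, fun α => ?_, fun G' hG' hFG' => ?_⟩
  · have hxG : x α ∈ minimalFace C z := by
      obtain ⟨t, ht, hw⟩ := exists_add_smul_sub_mem_of_mem_intrinsicInterior hz
        (subset_convexHull ℝ _ (mem_range_self α))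
      exact ⟨hxC α, t, ht, hhullC hw⟩
    exact (isFace_minimalFace hC z).subset_of_mem_intrinsicInterior (hF α).2.1 (hx α) hxG
  · have hzG' : z ∈ G' := convexHull_min (range_subset_iff.2 fun α => hFG' α
      (intrinsicInterior_subset (hx α))) hG'.1 (intrinsicInterior_subset hz)
    exact hG'.subset_of_mem_intrinsicInterior minimalFace_subset hzG hzG'

/-- Given a nonempty family of faces `F α` of a convex set `C`, points
`x α ∈ ri(F α)` and `z ∈ ri(conv {x α})`, the face `F(C,z)` of `C` with `z` in its relative
interior exists and is the supremum of the family in the face lattice. -/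
theorem stmt_2 (C : Set E) (hC : Convex ℝ C) {ι : Type*} [Nonempty ι]
    (F : ι → Set E) (hF : ∀ α, IsFace C (F α)) (x : ι → E)
    (hx : ∀ α, x α ∈ intrinsicInterior ℝ (F α))
    (z : E) (hz : z ∈ intrinsicInterior ℝ (convexHull ℝ (Set.range x))) :
    ∃ G, IsFace C G ∧ z ∈ intrinsicInterior ℝ G ∧
      (∀ α, F α ⊆ G) ∧ ∀ G', IsFace C G' → (∀ α, F α ⊆ G') → G ⊆ G' :=
  stmt_2_general C hC F hF x hx z hz
end

section
/- Let C ⊆ E be a nonempty convex set and x ∈ C. Then N(C,x) = (N(C,x) ∩ lin(C)) + lin(C)^⊥, and the following are equivalent: (i) N(C,x) is a linear subspace of E; (ii) x ∈ ri(C); (iii) N(C,x) = lin(C)^⊥. -/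
open scoped Pointwise RealInnerProductSpace

variable {E : Type*} [NormedAddCommGroup E] [InnerProductSpace ℝ E] [FiniteDimensional ℝ E]

/-! The normal cone is stable under adding vectors of `lin(C)^⊥` and under the orthogonal
projection onto `lin(C)`, which gives the decomposition. If `x ∈ ri C`, every segment `[y, x]`
in `C` can be prolonged beyond `x` inside `C`, so a normal vector `u` satisfies
`⟪u, y - x⟫ = 0` for all `y ∈ C`, i.e. `u ∈ lin(C)^⊥`; the same holds when `N(C,x)` is closed
under negation. If `x ∉ ri C`, then inside `lin(C)` the point `0` lies outside the interior of
`C - x`, which is nonempty, and Hahn–Banach there yields a nonzero normal vector in `lin(C)`. -/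

section Affine

open scoped Topology

variable {G : Type*} [NormedAddCommGroup G] [NormedSpace ℝ G] {s : Set G} {p q : G}

theorem sub_mem_direction_affineSpan (hp : p ∈ s) (hq : q ∈ s) :
    q - p ∈ (affineSpan ℝ s).direction :=
  AffineSubspace.vsub_mem_direction (subset_affineSpan ℝ s hq) (subset_affineSpan ℝ s hp)

theorem add_mem_intrinsicInterior_iff (hp : p ∈ affineSpan ℝ s) (v : (affineSpan ℝ s).direction) :
    (v : G) + p ∈ intrinsicInterior ℝ s ↔
      v ∈ interior {w : (affineSpan ℝ s).direction | (w : G) + p ∈ s} := by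
  have : Nonempty (affineSpan ℝ s) := ⟨⟨p, hp⟩⟩
  let φ := (AffineIsometryEquiv.vaddConst ℝ (⟨p, hp⟩ : affineSpan ℝ s)).toHomeomorph
  change _ ↔ v ∈ interior (φ ⁻¹' ((↑) ⁻¹' s))
  rw [← φ.preimage_interior, mem_intrinsicInterior]
  refine ⟨?_, fun h => ⟨φ v, h, rfl⟩⟩
  rintro ⟨y, hy, hyv⟩
  rwa [show y = φ v from Subtype.ext hyv] at hy

theorem exists_pos_add_smul_sub_mem_of_mem_intrinsicInterior (hp : p ∈ intrinsicInterior ℝ s)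
    (hq : q ∈ s) : ∃ t : ℝ, 0 < t ∧ p + t • (p - q) ∈ s := by
  have hps := intrinsicInterior_subset hp
  set D := {v : (affineSpan ℝ s).direction | (v : G) + p ∈ s}
  let w : (affineSpan ℝ s).direction := ⟨p - q, sub_mem_direction_affineSpan hq hps⟩
  have hD : D ∈ 𝓝 0 := mem_interior_iff_mem_nhds.1 <|
    (add_mem_intrinsicInterior_iff (subset_affineSpan ℝ s hps) 0).1 (by simpa using hp)
  have hw : ∀ᶠ t in 𝓝[>] (0 : ℝ), t • w ∈ D :=
    nhdsWithin_le_nhds <|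
      ((continuous_id.smul continuous_const).tendsto' 0 0 (by simp)).eventually hD
  obtain ⟨t, htD, ht⟩ := (hw.and self_mem_nhdsWithin).exists
  exact ⟨t, ht, by simpa [D, w, add_comm] using htD⟩

end Affine

section NormalCone

variable {F : Type*} [NormedAddCommGroup F] [InnerProductSpace ℝ F] {C : Set F} {x u : F}

theorem mem_orthogonal_direction_affineSpan (hx : x ∈ C) (h : ∀ y ∈ C, ⟪u, y - x⟫ = 0) :
    u ∈ (affineSpan ℝ C).directionᗮ := by
  rw [direction_affineSpan, vectorSpan_eq_span_vsub_set_right ℝ hx, Submodule.mem_orthogonal']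
  intro v hv
  refine (Submodule.span_le (p := LinearMap.ker (innerₛₗ ℝ u))).2 ?_ hv
  rintro _ ⟨y, hy, rfl⟩
  exact h y hy

theorem add_mem_normalCone_of_mem_orthogonal {w : F} (hx : x ∈ C) (hu : u ∈ normalCone C x)
    (hw : w ∈ (affineSpan ℝ C).directionᗮ) : u + w ∈ normalCone C x := by
  intro y hy
  rw [inner_add_left,
    Submodule.inner_left_of_mem_orthogonal (sub_mem_direction_affineSpan hx hy) hw, add_zero]
  exact hu y hy

theorem orthogonal_direction_affineSpan_subset_normalCone (hx : x ∈ C) :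
    ((affineSpan ℝ C).directionᗮ : Set F) ⊆ normalCone C x := fun w hw => by
  simpa using add_mem_normalCone_of_mem_orthogonal hx (u := 0) (fun y _ => by simp) hw

theorem starProjection_mem_normalCone [FiniteDimensional ℝ F] (hx : x ∈ C)
    (hu : u ∈ normalCone C x) :
    (affineSpan ℝ C).direction.starProjection u ∈ normalCone C x := by
  have := add_mem_normalCone_of_mem_orthogonal hx hu
    (neg_mem ((affineSpan ℝ C).direction.sub_starProjection_mem_orthogonal u))
  rwa [neg_sub, add_sub_cancel] at this

theorem normalCone_eq_inter_direction_add_orthogonal [FiniteDimensional ℝ F] (hx : x ∈ C) :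
    normalCone C x = (normalCone C x ∩ ((affineSpan ℝ C).direction : Set F)) +
      (((affineSpan ℝ C).directionᗮ : Submodule ℝ F) : Set F) := by
  set V := (affineSpan ℝ C).direction
  refine subset_antisymm (fun u hu => ?_) ?_
  · exact Set.mem_add.2 ⟨V.starProjection u, ⟨starProjection_mem_normalCone hx hu,
      V.starProjection_apply_mem u⟩, u - V.starProjection u, V.sub_starProjection_mem_orthogonal u,
      add_sub_cancel _ _⟩
  · rintro _ ⟨u, ⟨hu, -⟩, w, hw, rfl⟩
    exact add_mem_normalCone_of_mem_orthogonal hx hu hw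

theorem normalCone_subset_orthogonal_of_neg_mem (hx : x ∈ C)
    (h : ∀ u ∈ normalCone C x, -u ∈ normalCone C x) :
    normalCone C x ⊆ (affineSpan ℝ C).directionᗮ := fun u hu =>
  mem_orthogonal_direction_affineSpan hx fun y hy =>
    le_antisymm (hu y hy) (by simpa [inner_neg_left] using h u hu y hy)

theorem normalCone_subset_orthogonal_of_mem_intrinsicInterior (hx : x ∈ intrinsicInterior ℝ C) :
    normalCone C x ⊆ (affineSpan ℝ C).directionᗮ := by
  intro u hu
  refine mem_orthogonal_direction_affineSpan (intrinsicInterior_subset hx) fun y hy =>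
    le_antisymm (hu y hy) ?_
  obtain ⟨t, ht, hyt⟩ := exists_pos_add_smul_sub_mem_of_mem_intrinsicInterior hx hy
  have := hu _ hyt
  rw [add_sub_cancel_left, inner_smul_right, ← neg_sub, inner_neg_right] at this
  nlinarith

theorem exists_ne_zero_mem_normalCone_inter_direction [FiniteDimensional ℝ F] (hC : Convex ℝ C)
    (hx : x ∈ C) (hri : x ∉ intrinsicInterior ℝ C) :
    ∃ u ∈ normalCone C x ∩ (affineSpan ℝ C).direction, u ≠ 0 := by
  set V := (affineSpan ℝ C).direction
  set D : Set V := {w | (w : F) + x ∈ C}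
  have hxA := subset_affineSpan ℝ C hx
  have hD : Convex ℝ D := (hC.translate_preimage_left x).linear_preimage V.subtype
  obtain ⟨z, hz⟩ := (intrinsicInterior_nonempty hC).2 ⟨x, hx⟩
  have hzD : (⟨z - x, sub_mem_direction_affineSpan hx (intrinsicInterior_subset hz)⟩ : V) ∈
      interior D := (add_mem_intrinsicInterior_iff hxA _).1 (by simpa using hz)
  have h0D : (0 : V) ∉ interior D := fun h =>
    hri (by simpa using (add_mem_intrinsicInterior_iff hxA 0).2 h)
  obtain ⟨f, hf0, hf⟩ := geometric_hahn_banach_of_nonempty_interior_point hD h0D ⟨_, hzD⟩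
  let u := (InnerProductSpace.toDual ℝ V).symm f
  refine ⟨u, ⟨fun y hy => ?_, u.2⟩, ?_⟩
  · calc ⟪(u : F), y - x⟫ = f ⟨y - x, sub_mem_direction_affineSpan hx hy⟩ := by
          rw [← InnerProductSpace.toDual_symm_apply]; rfl
      _ ≤ f 0 := hf _ (by simpa [D] using hy)
      _ = 0 := map_zero f
  · intro hu
    exact hf0 ((InnerProductSpace.toDual ℝ V).symm.map_eq_zero_iff.1 (Subtype.ext hu))

theorem normalCone_subset_orthogonal_iff [FiniteDimensional ℝ F] (hC : Convex ℝ C) (hx : x ∈ C) :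
    normalCone C x ⊆ (affineSpan ℝ C).directionᗮ ↔ x ∈ intrinsicInterior ℝ C := by
  refine ⟨fun h => by_contra fun hri => ?_, normalCone_subset_orthogonal_of_mem_intrinsicInterior⟩
  obtain ⟨u, ⟨huN, huV⟩, hu0⟩ := exists_ne_zero_mem_normalCone_inter_direction hC hx hri
  exact hu0 (Submodule.disjoint_def.1 (Submodule.orthogonal_disjoint _) u huV (h huN))

end NormalCone

theorem stmt_3_general (C : Set E) (hC : Convex ℝ C) (x : E) (hx : x ∈ C) :
    normalCone C x =
      (normalCone C x ∩ ((affineSpan ℝ C).direction : Set E)) +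
        ((((affineSpan ℝ C).direction)ᗮ : Submodule ℝ E) : Set E) ∧
    ((∃ W : Submodule ℝ E, normalCone C x = (W : Set E)) ↔ x ∈ intrinsicInterior ℝ C) ∧
    (x ∈ intrinsicInterior ℝ C ↔
      normalCone C x = ((((affineSpan ℝ C).direction)ᗮ : Submodule ℝ E) : Set E)) := by
  have hperp := orthogonal_direction_affineSpan_subset_normalCone hx
  have hri := normalCone_subset_orthogonal_iff hC hx
  refine ⟨normalCone_eq_inter_direction_add_orthogonal hx,
    ⟨?_, fun h => ⟨_, (hri.2 h).antisymm hperp⟩⟩, fun h => (hri.2 h).antisymm hperp,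
    fun h => hri.1 h.subset⟩
  rintro ⟨W, hW⟩
  refine hri.1 (normalCone_subset_orthogonal_of_neg_mem hx fun u hu => ?_)
  rw [hW] at hu ⊢
  exact neg_mem hu

/-- For a nonempty convex set `C` and `x ∈ C`:
`N(C,x) = (N(C,x) ∩ lin C) + lin(C)^⊥`, and `N(C,x)` is a linear subspace iff
`x ∈ ri(C)` iff `N(C,x) = lin(C)^⊥`. -/
theorem stmt_3 (C : Set E) (hC : Convex ℝ C) (hne : C.Nonempty) (x : E) (hx : x ∈ C) :
    normalCone C x =
      (normalCone C x ∩ ((affineSpan ℝ C).direction : Set E)) +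
        ((((affineSpan ℝ C).direction)ᗮ : Submodule ℝ E) : Set E) ∧
    ((∃ W : Submodule ℝ E, normalCone C x = (W : Set E)) ↔ x ∈ intrinsicInterior ℝ C) ∧
    (x ∈ intrinsicInterior ℝ C ↔
      normalCone C x = ((((affineSpan ℝ C).direction)ᗮ : Submodule ℝ E) : Set E)) :=
  stmt_3_general C hC x hx
end

section
/- Let C ⊆ E be a convex set containing at least two points. Then the map F ↦ N(C,F) is a bijection from the set of exposed faces of C onto the set of normal cones of C, and for all exposed faces F, G of C one has F ⊆ G if and only if N(C,G) ⊆ N(C,F); that is, F ↦ N(C,F) is an antitone lattice isomorphism from the exposed face lattice onto the normal cone lattice. -/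
open scoped Pointwise RealInnerProductSpace

variable {E : Type*} [NormedAddCommGroup E] [InnerProductSpace ℝ E] [FiniteDimensional ℝ E]

set_option linter.unusedSectionVars false

private lemma stretch {F : Set E} {x z : E}
    (hx : x ∈ intrinsicInterior ℝ F) (hz : z ∈ F) :
    ∃ t : ℝ, 0 < t ∧ x + t • (x - z) ∈ F := by
  rw [mem_intrinsicInterior] at hx
  obtain ⟨x', hx', hxx⟩ := hx
  have hzmem : z ∈ affineSpan ℝ F := subset_affineSpan ℝ F hz
  set zz : affineSpan ℝ F := ⟨z, hzmem⟩ with hzz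
  have hmem : ∀ t : ℝ, (x' : E) + t • ((x' : E) - z) ∈ affineSpan ℝ F := by
    intro t
    have := (affineSpan ℝ F).smul_vsub_vadd_mem t x'.2 hzmem x'.2
    simpa [vsub_eq_sub, vadd_eq_add, add_comm] using this
  set g : ℝ → affineSpan ℝ F := fun t => ⟨(x' : E) + t • ((x' : E) - z), hmem t⟩ with hg
  have hgc : Continuous g := by
    apply Continuous.subtype_mk
    exact continuous_const.add (continuous_id.smul continuous_const)
  have h0 : g 0 ∈ interior ((↑) ⁻¹' F : Set (affineSpan ℝ F)) := by
    have : g 0 = x' := by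
      apply Subtype.ext; simp [hg]
    rwa [this]
  have hopen : IsOpen (g ⁻¹' interior ((↑) ⁻¹' F : Set (affineSpan ℝ F))) :=
    isOpen_interior.preimage hgc
  rw [Metric.isOpen_iff] at hopen
  obtain ⟨ε, hε, hball⟩ := hopen 0 h0
  refine ⟨ε / 2, by positivity, ?_⟩
  have : g (ε / 2) ∈ interior ((↑) ⁻¹' F : Set (affineSpan ℝ F)) := by
    apply hball
    rw [Metric.mem_ball, Real.dist_eq, sub_zero, abs_of_pos (by positivity)]
    linarith
  have := interior_subset this
  simpa [hg, hxx] using this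

private lemma mem_normalCone_iff {C : Set E} {x u : E} :
    u ∈ normalCone C x ↔ ∀ y ∈ C, ⟪u, y⟫ ≤ ⟪u, x⟫ := by
  simp [normalCone, inner_sub_right, sub_nonpos]

private lemma mem_expFace_iff {C : Set E} {x u : E} :
    x ∈ expFace C u ↔ x ∈ C ∧ u ∈ normalCone C x := by
  simp [expFace, mem_normalCone_iff]

private lemma expFace_subset {C : Set E} {u : E} : expFace C u ⊆ C :=
  fun _ h => h.1

private lemma expFace_convex {C : Set E} (hC : Convex ℝ C) (u : E) :
    Convex ℝ (expFace C u) := by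
  intro a ha b hb s t hs ht hst
  refine ⟨hC ha.1 hb.1 hs ht hst, fun y hy => ?_⟩
  have h1 := ha.2 y hy
  have h2 := hb.2 y hy
  rw [inner_add_right, real_inner_smul_right, real_inner_smul_right]
  have key : ⟪u, y⟫ = s * ⟪u, y⟫ + t * ⟪u, y⟫ := by rw [← add_mul, hst, one_mul]
  have k1 := mul_le_mul_of_nonneg_left h1 hs
  have k2 := mul_le_mul_of_nonneg_left h2 ht
  linarith

private lemma normalCone_convex (C : Set E) (x : E) : Convex ℝ (normalCone C x) := by
  intro a ha b hb s t hs ht hst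
  intro y hy
  have h1 := ha y hy
  have h2 := hb y hy
  rw [inner_add_left, real_inner_smul_left, real_inner_smul_left]
  have := add_le_add (mul_le_mul_of_nonneg_left h1 hs) (mul_le_mul_of_nonneg_left h2 ht)
  nlinarith

private lemma zero_mem_normalCone (C : Set E) (x : E) : (0:E) ∈ normalCone C x := by
  intro y hy; simp

private lemma expFace_zero {C : Set E} : expFace C (0:E) = C := by
  ext z; simp [expFace]

private lemma isFace_of_isExpFace {C F : Set E} (hC : Convex ℝ C) (hF : IsExpFace C F) :
    IsFace C F := by
  rcases hF with rfl | rfl | ⟨u, -, rfl⟩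
  · exact ⟨convex_empty, Set.empty_subset _, fun x hx y hy h => absurd h (by simp)⟩
  · exact ⟨hC, subset_rfl, fun x hx y hy _ => ⟨hx, hy⟩⟩
  · refine ⟨expFace_convex hC u, expFace_subset, ?_⟩
    rintro a ha b hb ⟨p, hp, hpF⟩
    obtain ⟨s, t, hs, ht, hst, rfl⟩ := hp
    have hap := hpF.2 a ha
    have hbp := hpF.2 b hb
    have hsum : ⟪u, s • a + t • b⟫ = s * ⟪u, a⟫ + t * ⟪u, b⟫ := by
      rw [inner_add_right, real_inner_smul_right, real_inner_smul_right]
    have k1 : t * ⟪u, b⟫ ≤ t * ⟪u, s • a + t • b⟫ := mul_le_mul_of_nonneg_left hbp ht.le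
    have k2 : s * ⟪u, a⟫ ≤ s * ⟪u, s • a + t • b⟫ := mul_le_mul_of_nonneg_left hap hs.le
    have k3 : s * ⟪u, s • a + t • b⟫ + t * ⟪u, s • a + t • b⟫ = ⟪u, s • a + t • b⟫ := by
      rw [← add_mul, hst, one_mul]
    have haeq : ⟪u, a⟫ = ⟪u, s • a + t • b⟫ := by
      refine le_antisymm hap (le_of_mul_le_mul_left ?_ hs)
      linarith
    have hbeq : ⟪u, b⟫ = ⟪u, s • a + t • b⟫ := by
      refine le_antisymm hbp (le_of_mul_le_mul_left ?_ ht)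
      linarith
    exact ⟨⟨ha, fun y hy => haeq ▸ hpF.2 y hy⟩, ⟨hb, fun y hy => hbeq ▸ hpF.2 y hy⟩⟩

/-- monotonicity of the normal cone -/
private lemma normalCone_anti {C F : Set E} (hFC : F ⊆ C) {x x' : E}
    (hx' : x' ∈ intrinsicInterior ℝ F) (hx : x ∈ F) :
    normalCone C x' ⊆ normalCone C x := by
  intro v hv
  obtain ⟨t, ht, hw⟩ := stretch hx' hx
  have h1 : ⟪v, (x' + t • (x' - x)) - x'⟫ ≤ 0 := hv _ (hFC hw)
  have h2 : ⟪v, x - x'⟫ ≤ 0 := hv x (hFC hx)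
  have h3 : ⟪v, x' - x⟫ ≤ 0 := by
    have : ⟪v, (x' + t • (x' - x)) - x'⟫ = t * ⟪v, x' - x⟫ := by
      rw [add_sub_cancel_left, real_inner_smul_right]
    nlinarith
  have heq : ⟪v, x' - x⟫ = 0 := by
    have : ⟪v, x - x'⟫ = -⟪v, x' - x⟫ := by rw [← inner_neg_right, neg_sub]
    linarith
  intro y hy
  have := hv y hy
  have hsplit : ⟪v, y - x⟫ = ⟪v, y - x'⟫ + ⟪v, x' - x⟫ := by
    rw [← inner_add_right, sub_add_sub_cancel]
  rw [hsplit, heq, add_zero]; exact this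

private lemma normalConeOf_eq {C F : Set E} (hFC : F ⊆ C) {x : E}
    (hx : x ∈ intrinsicInterior ℝ F) : normalConeOf C F = normalCone C x := by
  apply Set.Subset.antisymm
  · exact Set.biInter_subset_of_mem hx
  · intro v hv
    rw [normalConeOf, Set.mem_iInter₂]
    intro x'' hx''
    exact normalCone_anti hFC hx (intrinsicInterior_subset hx'') hv

/-- the key sharpness lemma -/
private lemma key_lemma {C : Set E} {x u : E} (hxC : x ∈ C)
    (hu : u ∈ intrinsicInterior ℝ (normalCone C x)) {x' : E}
    (hx' : x' ∈ intrinsicInterior ℝ (expFace C u)) :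
    normalCone C x' = normalCone C x := by
  have huN : u ∈ normalCone C x := intrinsicInterior_subset hu
  have hxG : x ∈ expFace C u := mem_expFace_iff.2 ⟨hxC, huN⟩
  have hx'G : x' ∈ expFace C u := intrinsicInterior_subset hx'
  have hx'C : x' ∈ C := hx'G.1
  have huxx' : ⟪u, x' - x⟫ = 0 := by
    have h1 : ⟪u, x'⟫ ≤ ⟪u, x⟫ := hxG.2 x' hx'C
    have h2 : ⟪u, x⟫ ≤ ⟪u, x'⟫ := hx'G.2 x hxC
    rw [inner_sub_right]; linarith
  apply Set.Subset.antisymm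
  · exact normalCone_anti expFace_subset hx' hxG
  · intro v hv
    obtain ⟨t, ht, hw⟩ := stretch hu hv
    have h1 : ⟪u + t • (u - v), x' - x⟫ ≤ 0 := hw x' hx'C
    have h2 : ⟪v, x' - x⟫ ≤ 0 := hv x' hx'C
    have heq : ⟪v, x' - x⟫ = 0 := by
      rw [inner_add_left, real_inner_smul_left, inner_sub_left] at h1
      nlinarith
    intro y hy
    have := hv y hy
    have hsplit : ⟪v, y - x'⟫ = ⟪v, y - x⟫ - ⟪v, x' - x⟫ := by
      rw [← inner_sub_right]; congr 1; abel
    rw [hsplit, heq, sub_zero]; exact this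

private lemma normalCone_eq_univ {C : Set E} {x : E} (h : normalCone C x = Set.univ) :
    C ⊆ {x} := by
  intro z hz
  have := (h ▸ Set.mem_univ (z - x) : z - x ∈ normalCone C x) z hz
  simp only [Set.mem_singleton_iff]
  have := real_inner_self_nonpos.1 this
  rwa [sub_eq_zero] at this

/-- For a convex set `C` with at least two points, `F ↦ N(C,F)` is a
bijection from the exposed faces of `C` onto the normal cones of `C`, and is an
antitone lattice isomorphism: `F ⊆ G ↔ N(C,G) ⊆ N(C,F)`. -/
theorem stmt_6 (C : Set E) (hC : Convex ℝ C) (x y : E) (hx : x ∈ C) (hy : y ∈ C)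
    (hxy : x ≠ y) :
    (∀ F, IsExpFace C F → IsNormalCone C (normalConeOf C F)) ∧
    (∀ N, IsNormalCone C N → ∃ F, IsExpFace C F ∧ normalConeOf C F = N) ∧
    (∀ F G, IsExpFace C F → IsExpFace C G →
      normalConeOf C F = normalConeOf C G → F = G) ∧
    (∀ F G, IsExpFace C F → IsExpFace C G →
      (F ⊆ G ↔ normalConeOf C G ⊆ normalConeOf C F)) := by
  have hface : ∀ F, IsExpFace C F → IsFace C F := fun F hF => isFace_of_isExpFace hC hF
  have hCne : ∀ z ∈ C, normalCone C z ≠ Set.univ := by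
    intro z hz h
    have h1 := normalCone_eq_univ h hx
    have h2 := normalCone_eq_univ h hy
    simp only [Set.mem_singleton_iff] at h1 h2
    exact hxy (h1.trans h2.symm)
  have part4 : ∀ F G, IsExpFace C F → IsExpFace C G →
      (F ⊆ G ↔ normalConeOf C G ⊆ normalConeOf C F) := by
    intro F G hF hG
    constructor
    · intro hFG v hv
      rw [normalConeOf, Set.mem_iInter₂]
      intro x₀ hx₀
      have hx₀G : x₀ ∈ G := hFG (intrinsicInterior_subset hx₀)
      obtain ⟨x', hx'⟩ :=
        Set.Nonempty.intrinsicInterior (hface G hG).1 ⟨x₀, hx₀G⟩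
      have hv' : v ∈ normalCone C x' := Set.biInter_subset_of_mem hx' hv
      exact normalCone_anti (hface G hG).2.1 hx' hx₀G hv'
    · intro hN z hzF
      obtain ⟨x₀, hx₀⟩ :=
        Set.Nonempty.intrinsicInterior (hface F hF).1 ⟨z, hzF⟩
      have hx₀F : x₀ ∈ F := intrinsicInterior_subset hx₀
      have hx₀C : x₀ ∈ C := (hface F hF).2.1 hx₀F
      have hGface := hface G hG
      rcases hG with hG0 | hGC | ⟨u, hu0, hGu⟩
      · exfalso
        have hGuniv : normalConeOf C G = Set.univ := by
          rw [hG0]; simp [normalConeOf]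
        have : normalCone C x₀ = Set.univ :=
          Set.eq_univ_of_univ_subset
            ((hGuniv ▸ hN).trans (Set.biInter_subset_of_mem hx₀))
        exact hCne x₀ hx₀C this
      · exact hGC ▸ (hface F hF).2.1 hzF
      · have huG : u ∈ normalConeOf C G := by
          rw [normalConeOf, Set.mem_iInter₂]
          intro x' hx'
          have : x' ∈ expFace C u := hGu ▸ intrinsicInterior_subset hx'
          exact (mem_expFace_iff.1 this).2
        have hx₀u : u ∈ normalCone C x₀ := Set.biInter_subset_of_mem hx₀ (hN huG)
        have hx₀G : x₀ ∈ G := hGu ▸ mem_expFace_iff.2 ⟨hx₀C, hx₀u⟩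
        obtain ⟨t, ht, hw⟩ := stretch hx₀ hzF
        have hseg : x₀ ∈ openSegment ℝ z (x₀ + t • (x₀ - z)) := by
          have h1t : (0:ℝ) < 1 + t := by linarith
          refine ⟨t / (1 + t), 1 / (1 + t), by positivity, by positivity,
            by field_simp; ring, ?_⟩
          match_scalars <;> (field_simp; try ring)
        exact (hGface.2.2 z ((hface F hF).2.1 hzF) _
          ((hface F hF).2.1 hw) ⟨x₀, hseg, hx₀G⟩).1
  refine ⟨fun F hF => ⟨F, hface F hF, rfl⟩, ?_, ?_, part4⟩
  · rintro N ⟨F, hF, rfl⟩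
    rcases F.eq_empty_or_nonempty with h | hne
    · exact ⟨F, Or.inl h, rfl⟩
    · obtain ⟨x₀, hx₀⟩ := Set.Nonempty.intrinsicInterior hF.1 hne
      have hx₀C : x₀ ∈ C := hF.2.1 (intrinsicInterior_subset hx₀)
      have hNF : normalConeOf C F = normalCone C x₀ := normalConeOf_eq hF.2.1 hx₀
      obtain ⟨u, hu⟩ :=
        Set.Nonempty.intrinsicInterior (normalCone_convex C x₀)
          ⟨0, zero_mem_normalCone C x₀⟩
      refine ⟨expFace C u, ?_, ?_⟩
      · by_cases h0 : u = 0
        · subst h0; exact Or.inr (Or.inl expFace_zero)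
        · exact Or.inr (Or.inr ⟨u, h0, rfl⟩)
      · rw [hNF]
        have hxG : x₀ ∈ expFace C u :=
          mem_expFace_iff.2 ⟨hx₀C, intrinsicInterior_subset hu⟩
        obtain ⟨x', hx'⟩ :=
          Set.Nonempty.intrinsicInterior (expFace_convex hC u) ⟨x₀, hxG⟩
        rw [normalConeOf_eq expFace_subset hx']
        exact key_lemma hx₀C hu hx'
  · intro F G hF hG heq
    exact Set.Subset.antisymm
      ((part4 F G hF hG).2 (le_of_eq heq.symm))
      ((part4 G F hG hF).2 (le_of_eq heq))
end

section
/- Let C ⊆ E be a convex set, V ⊆ E a linear subspace, and π_V the orthogonal projection onto V. If F is a face of π_V(C), then the lift (F + V^⊥) ∩ C is a face of C. Moreover, for every nonzero v ∈ V, (F⊥(π_V(C),v) + V^⊥) ∩ C = F⊥(C,v). -/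
open scoped Pointwise RealInnerProductSpace

variable {E : Type*} [NormedAddCommGroup E] [InnerProductSpace ℝ E] [FiniteDimensional ℝ E]

/-! Since every face of `π_V(C)` lies in `V`, adding `V^⊥` to it is the same as taking its preimage
under `π_V`. Faces pull back to faces along any linear map, and for `v ∈ V` the functional
`⟨v, ·⟩` factors through `π_V`, so the exposed faces correspond as well. -/

section LinearImage

variable {X Y : Type*} [NormedAddCommGroup X] [InnerProductSpace ℝ X]
  [NormedAddCommGroup Y] [InnerProductSpace ℝ Y]

theorem IsFace.preimage_inter {C : Set X} {F : Set Y} (hC : Convex ℝ C) (f : X →ₗ[ℝ] Y)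
    (hF : IsFace (f '' C) F) : IsFace C (f ⁻¹' F ∩ C) := by
  obtain ⟨hFconv, -, hFext⟩ := hF
  refine ⟨(hFconv.linear_preimage f).inter hC, Set.inter_subset_right, ?_⟩
  rintro x hx y hy ⟨z, hz, hzF, -⟩
  have hfz : f z ∈ openSegment ℝ (f x) (f y) :=
    image_openSegment ℝ f.toAffineMap x y ▸ Set.mem_image_of_mem f hz
  obtain ⟨hfx, hfy⟩ :=
    hFext (f x) (Set.mem_image_of_mem f hx) (f y) (Set.mem_image_of_mem f hy) ⟨f z, hfz, hzF⟩
  exact ⟨⟨hfx, hx⟩, ⟨hfy, hy⟩⟩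

theorem preimage_expFace_image_inter (C : Set X) (f : X →ₗ[ℝ] Y) {u : Y} {w : X}
    (huw : ∀ x, ⟪u, f x⟫ = ⟪w, x⟫) : f ⁻¹' expFace (f '' C) u ∩ C = expFace C w := by
  ext x
  simp only [expFace, Set.mem_inter_iff, Set.mem_preimage, Set.mem_ofPred_eq,
    Set.forall_mem_image, huw]
  constructor
  · rintro ⟨⟨-, hmax⟩, hx⟩
    exact ⟨hx, hmax⟩
  · rintro ⟨hx, hmax⟩
    exact ⟨⟨⟨x, hx, rfl⟩, hmax⟩, hx⟩

end LinearImage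

namespace Submodule

variable {X : Type*} [NormedAddCommGroup X] [InnerProductSpace ℝ X]
  (V : Submodule ℝ X) [V.HasOrthogonalProjection]

theorem add_orthogonal_eq_preimage_starProjection {F : Set X} (hF : F ⊆ V) :
    F + (Vᗮ : Set X) = V.starProjection ⁻¹' F := by
  ext x
  constructor
  · rintro ⟨f, hf, w, hw, rfl⟩
    rwa [Set.mem_preimage, eq_starProjection_of_mem_orthogonal' (hF hf) hw rfl]
  · intro hx
    exact ⟨_, hx, _, V.sub_starProjection_mem_orthogonal x, add_sub_cancel _ _⟩

theorem inner_starProjection_right_of_mem {v : X} (hv : v ∈ V) (x : X) :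
    ⟪v, V.starProjection x⟫ = ⟪v, x⟫ := by
  rw [← V.inner_starProjection_left_eq_right, starProjection_eq_self_iff.mpr hv]

end Submodule

/-- For a convex set `C` and a linear subspace `V` with orthogonal
projection `π_V`: the lift `(F + V^⊥) ∩ C` of any face `F` of `π_V(C)` is a face of `C`,
and for nonzero `v ∈ V`, `(F⊥(π_V(C),v) + V^⊥) ∩ C = F⊥(C,v)`. -/
theorem stmt_8 (C : Set E) (hC : Convex ℝ C) (V : Submodule ℝ E) :
    (∀ F, IsFace ((fun z : E => (Submodule.orthogonalProjection V z : E)) '' C) F →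
      IsFace C ((F + ((Vᗮ : Submodule ℝ E) : Set E)) ∩ C)) ∧
    (∀ v ∈ V, v ≠ 0 →
      (expFace ((fun z : E => (Submodule.orthogonalProjection V z : E)) '' C) v +
        ((Vᗮ : Submodule ℝ E) : Set E)) ∩ C = expFace C v) := by
  change (∀ F, IsFace (V.starProjection '' C) F → _) ∧
    ∀ v ∈ V, v ≠ 0 → (expFace (V.starProjection '' C) v + _) ∩ C = _
  have image_subset : V.starProjection '' C ⊆ V :=
    Set.image_subset_iff.mpr fun z _ => V.starProjection_apply_mem z
  refine ⟨fun F hF => ?_, fun v hv _ => ?_⟩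
  · rw [V.add_orthogonal_eq_preimage_starProjection (hF.2.1.trans image_subset)]
    exact hF.preimage_inter hC (V.starProjection : E →ₗ[ℝ] E)
  · rw [V.add_orthogonal_eq_preimage_starProjection
      (fun _ hx => image_subset hx.1)]
    exact preimage_expFace_image_inter C (V.starProjection : E →ₗ[ℝ] E)
      (V.inner_starProjection_right_of_mem hv)
end

section
/- Let C ⊆ E be a convex set, V ⊆ E a linear subspace with orthogonal projection π_V, and let a ∈ C + V^⊥. Then N(π_V(C), π_V(a)) = N(C + V^⊥, a) + V^⊥. If moreover a ∈ C, then N(C + V^⊥, a) = N(C,a) ∩ V. -/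
open scoped Pointwise RealInnerProductSpace

variable {E : Type*} [NormedAddCommGroup E] [InnerProductSpace ℝ E] [FiniteDimensional ℝ E]

/-! Write `P` for the orthogonal projection onto `V`. Since `P` is self-adjoint,
`⟪u, P y - P a⟫ = ⟪P u, y - a⟫`, so `u` is normal to `P '' C` at `P a` iff `P u` is normal to the
cylinder `C + Vᗮ`, which has the same image as `C`. The normal cone of the cylinder is stable
under `P`, so its preimage under `P` is the cone plus `Vᗮ`. When `a ∈ C`, the points `a ± w`
(`w ∈ Vᗮ`) lie in the cylinder, which forces its normals into `Vᗮᗮ = V`. -/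

section

variable {F : Type*} [NormedAddCommGroup F] [InnerProductSpace ℝ F]

theorem normalCone_anti_s10 {C D : Set F} (hCD : C ⊆ D) (a : F) :
    normalCone D a ⊆ normalCone C a :=
  fun _ hu y hy => hu y (hCD hy)

theorem normalCone_add_submodule_subset_orthogonal {C : Set F} (K : Submodule ℝ F) {a : F}
    (ha : a ∈ C) : normalCone (C + (K : Set F)) a ⊆ (Kᗮ : Set F) := by
  intro u hu
  rw [SetLike.mem_coe, Submodule.mem_orthogonal']
  intro w hw
  have hplus : ⟪u, a + w - a⟫ ≤ 0 := hu _ (Set.add_mem_add ha hw)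
  have hminus : ⟪u, a + -w - a⟫ ≤ 0 := hu _ (Set.add_mem_add ha (K.neg_mem hw))
  simp only [add_sub_cancel_left, inner_neg_right] at hplus hminus
  linarith

theorem normalCone_add_submodule {C : Set F} (K : Submodule ℝ F) {a : F} (ha : a ∈ C) :
    normalCone (C + (K : Set F)) a = normalCone C a ∩ (Kᗮ : Set F) := by
  ext u
  refine ⟨fun hu => ⟨normalCone_anti_s10 (Set.subset_add_left C K.zero_mem) a hu,
    normalCone_add_submodule_subset_orthogonal K ha hu⟩, ?_⟩
  rintro ⟨hu, huK⟩ _ ⟨c, hc, w, hw, rfl⟩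
  rw [add_sub_right_comm, inner_add_right, Submodule.inner_left_of_mem_orthogonal hw huK,
    add_zero]
  exact hu c hc

variable (V : Submodule ℝ F) [V.HasOrthogonalProjection]

theorem image_starProjection_add_orthogonal (C : Set F) :
    V.starProjection '' (C + (Vᗮ : Set F)) = V.starProjection '' C := by
  refine subset_antisymm ?_ (Set.image_mono (Set.subset_add_left C Vᗮ.zero_mem))
  rintro _ ⟨_, ⟨c, hc, w, hw, rfl⟩, rfl⟩
  rw [map_add, (V.starProjection_apply_eq_zero_iff).2 hw, add_zero]
  exact Set.mem_image_of_mem _ hc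

theorem mem_normalCone_image_starProjection_iff (D : Set F) (a u : F) :
    u ∈ normalCone (V.starProjection '' D) (V.starProjection a) ↔
      V.starProjection u ∈ normalCone D a := by
  simp only [normalCone, Set.mem_ofPred_eq, Set.forall_mem_image, ← map_sub,
    V.inner_starProjection_left_eq_right]

theorem starProjection_mem_normalCone_add_orthogonal {C : Set F} {a u : F}
    (hu : u ∈ normalCone (C + (Vᗮ : Set F)) a) :
    V.starProjection u ∈ normalCone (C + (Vᗮ : Set F)) a := by
  rintro _ ⟨c, hc, w, hw, rfl⟩
  rw [V.inner_starProjection_left_eq_right]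
  -- `P(c + w) - P a` is again a difference `y - a` with `y` in the cylinder
  have hy : c + ((a - V.starProjection a) - (c - V.starProjection c)) ∈ C + (Vᗮ : Set F) :=
    Set.add_mem_add hc (Vᗮ.sub_mem (V.sub_starProjection_mem_orthogonal a)
      (V.sub_starProjection_mem_orthogonal c))
  convert hu _ hy using 2
  rw [map_sub, map_add, (V.starProjection_apply_eq_zero_iff).2 hw]
  abel

theorem preimage_starProjection_eq_add_orthogonal {N : Set F}
    (hN : ∀ n ∈ N, V.starProjection n ∈ N) :
    V.starProjection ⁻¹' N = N + (Vᗮ : Set F) := by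
  refine subset_antisymm (fun u hu => ?_) ?_
  · exact ⟨_, hu, _, V.sub_starProjection_mem_orthogonal u, add_sub_cancel _ _⟩
  · rintro _ ⟨n, hn, w, hw, rfl⟩
    rw [Set.mem_preimage, map_add, (V.starProjection_apply_eq_zero_iff).2 hw, add_zero]
    exact hN n hn

end

theorem stmt_10_general (C : Set E) (V : Submodule ℝ E) (a : E) :
    normalCone ((fun z : E => (Submodule.orthogonalProjection V z : E)) '' C)
        ((Submodule.orthogonalProjection V a : E)) =
      normalCone (C + ((Vᗮ : Submodule ℝ E) : Set E)) a +
        ((Vᗮ : Submodule ℝ E) : Set E) ∧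
    (a ∈ C → normalCone (C + ((Vᗮ : Submodule ℝ E) : Set E)) a =
      normalCone C a ∩ (V : Set E)) := by
  refine ⟨?_, fun ha => ?_⟩
  · change normalCone (V.starProjection '' C) (V.starProjection a) = _
    rw [← preimage_starProjection_eq_add_orthogonal V
      fun _ => starProjection_mem_normalCone_add_orthogonal V,
      ← image_starProjection_add_orthogonal V C]
    ext u
    exact mem_normalCone_image_starProjection_iff V _ a u
  · rw [normalCone_add_submodule Vᗮ ha, Submodule.orthogonal_orthogonal]

/-- For convex `C`, a subspace `V` and `a ∈ C + V^⊥`: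
`N(π_V(C), π_V(a)) = N(C + V^⊥, a) + V^⊥`, and if `a ∈ C` then
`N(C + V^⊥, a) = N(C,a) ∩ V`. -/
theorem stmt_10 (C : Set E) (hC : Convex ℝ C) (V : Submodule ℝ E) (a : E)
    (ha : a ∈ C + ((Vᗮ : Submodule ℝ E) : Set E)) :
    normalCone ((fun z : E => (Submodule.orthogonalProjection V z : E)) '' C)
        ((Submodule.orthogonalProjection V a : E)) =
      normalCone (C + ((Vᗮ : Submodule ℝ E) : Set E)) a +
        ((Vᗮ : Submodule ℝ E) : Set E) ∧
    (a ∈ C → normalCone (C + ((Vᗮ : Submodule ℝ E) : Set E)) a =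
      normalCone C a ∩ (V : Set E)) :=
  stmt_10_general C V a
end

section
/- Let C ⊆ E be a convex set, V ⊆ E a linear subspace with orthogonal projection π_V, and let v ∈ V be a nonzero vector that is sharp normal for C. Then v is sharp normal for π_V(C). -/
open scoped Pointwise RealInnerProductSpace

variable {E : Type*} [NormedAddCommGroup E] [InnerProductSpace ℝ E] [FiniteDimensional ℝ E]

/-! Since `v ∈ V`, the functional `⟪v, ·⟫` does not see the projection `P = π_V`, so the exposed
face of `P(C)` by `v` is `P(F)` with `F = F⊥(C,v)`; and since `P` is self-adjoint,
`N(P(C), P x) = P⁻¹(N(C,x))`. A point of `ri(P(F))` is the image `P x` of some `x ∈ ri F`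
(Rockafellar, Thm. 6.6, via prolongation of segments), and then `P v = v ∈ ri(N(C,x))`, which
pulls back to `v ∈ ri(P⁻¹(N(C,x)))` because preimages under continuous affine maps keep
relative interior points. -/

section IntrinsicInterior

variable {W W₂ : Type*} [NormedAddCommGroup W] [NormedSpace ℝ W]
  [NormedAddCommGroup W₂] [NormedSpace ℝ W₂]

theorem mem_intrinsicInterior_iff_ball {s : Set W} {x : W} :
    x ∈ intrinsicInterior ℝ s ↔
      x ∈ affineSpan ℝ s ∧ ∃ ε > 0, Metric.ball x ε ∩ affineSpan ℝ s ⊆ s := by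
  rw [mem_intrinsicInterior]
  constructor
  · rintro ⟨⟨x, hx⟩, hxi, rfl⟩
    obtain ⟨ε, hε, hball⟩ := Metric.mem_nhds_iff.1 (mem_interior_iff_mem_nhds.1 hxi)
    exact ⟨hx, ε, hε, fun z ⟨hzx, hz⟩ => hball (show (⟨z, hz⟩ : affineSpan ℝ s) ∈ _ from hzx)⟩
  · rintro ⟨hx, ε, hε, hball⟩
    refine ⟨⟨x, hx⟩, mem_interior_iff_mem_nhds.2 (Metric.mem_nhds_iff.2 ⟨ε, hε, ?_⟩), rfl⟩
    exact fun z hz => hball ⟨hz, z.2⟩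

theorem exists_mem_openSegment_of_mem_intrinsicInterior {s : Set W} {x y : W}
    (hx : x ∈ intrinsicInterior ℝ s) (hy : y ∈ s) : ∃ z ∈ s, x ∈ openSegment ℝ y z := by
  obtain ⟨hxs, ε, hε, hball⟩ := mem_intrinsicInterior_iff_ball.1 hx
  set t : ℝ := 1 + ε / (dist y x + 1)
  have ht : 1 < t := lt_add_of_pos_right 1 (by positivity)
  refine ⟨AffineMap.lineMap y x t, hball ⟨?_, ?_⟩, ?_⟩
  · rw [Metric.mem_ball, dist_lineMap_right, show 1 - t = -(ε / (dist y x + 1)) by ring,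
      norm_neg, Real.norm_of_nonneg (by positivity), div_mul_eq_mul_div,
      div_lt_iff₀ (by positivity)]
    exact mul_lt_mul_of_pos_left (lt_add_one _) hε
  · exact AffineMap.lineMap_mem t (subset_affineSpan ℝ s hy) hxs
  · convert lineMap_mem_openSegment ℝ y (AffineMap.lineMap y x t)
      (Set.mem_Ioo.2 ⟨inv_pos.2 (by linarith), inv_lt_one_of_one_lt₀ ht⟩)
    rw [AffineMap.lineMap_lineMap_right, inv_mul_cancel₀ (by positivity),
      AffineMap.lineMap_apply_one]

theorem Convex.openSegment_intrinsicInterior_self_subset_intrinsicInterior_s11 {s : Set W}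
    (hs : Convex ℝ s) {x z : W} (hx : x ∈ intrinsicInterior ℝ s) (hz : z ∈ s) :
    openSegment ℝ x z ⊆ intrinsicInterior ℝ s := by
  obtain ⟨hxs, ε, hε, hball⟩ := mem_intrinsicInterior_iff_ball.1 hx
  have hzs : z ∈ affineSpan ℝ s := subset_affineSpan ℝ s hz
  rw [openSegment_symm, openSegment_eq_image_lineMap]
  rintro _ ⟨c, ⟨hc₀, hc₁⟩, rfl⟩
  refine mem_intrinsicInterior_iff_ball.2
    ⟨AffineMap.lineMap_mem c hzs hxs, c * ε, by positivity, fun u ⟨hu, hus⟩ => ?_⟩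
  set p := AffineMap.lineMap z u c⁻¹
  have hpx : p - x = c⁻¹ • (u - AffineMap.lineMap z x c) := by
    simp only [p, AffineMap.lineMap_apply_module']
    match_scalars <;> field_simp; ring
  have hp : p ∈ s := by
    refine hball ⟨?_, AffineMap.lineMap_mem _ hzs hus⟩
    rw [Metric.mem_ball, dist_eq_norm, hpx, norm_smul, Real.norm_of_nonneg (by positivity),
      ← dist_eq_norm, inv_mul_lt_iff₀ hc₀]
    exact hu
  convert hs.lineMap_mem hz hp ⟨hc₀.le, hc₁.le⟩
  rw [AffineMap.lineMap_lineMap_right, mul_inv_cancel₀ hc₀.ne', AffineMap.lineMap_apply_one]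

theorem intrinsicInterior_image_subset_image_intrinsicInterior [FiniteDimensional ℝ W]
    (f : W →ᵃ[ℝ] W₂) {s : Set W} (hs : Convex ℝ s) :
    intrinsicInterior ℝ (f '' s) ⊆ f '' intrinsicInterior ℝ s := by
  intro y hy
  obtain ⟨x₀, hx₀⟩ := (Set.image_nonempty.1 ⟨y, intrinsicInterior_subset hy⟩).intrinsicInterior hs
  obtain ⟨_, ⟨z, hz, rfl⟩, hyz⟩ :=
    exists_mem_openSegment_of_mem_intrinsicInterior hy ⟨x₀, intrinsicInterior_subset hx₀, rfl⟩
  rw [← image_openSegment] at hyz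
  obtain ⟨x, hx, rfl⟩ := hyz
  exact ⟨x, hs.openSegment_intrinsicInterior_self_subset_intrinsicInterior_s11 hx₀ hz hx, rfl⟩

theorem mem_intrinsicInterior_preimage (f : W →ᴬ[ℝ] W₂) {N : Set W₂} {x : W}
    (hx : f x ∈ intrinsicInterior ℝ N) : x ∈ intrinsicInterior ℝ (f ⁻¹' N) := by
  obtain ⟨-, ε, hε, hball⟩ := mem_intrinsicInterior_iff_ball.1 hx
  obtain ⟨δ, hδ, hfδ⟩ := Metric.continuous_iff.1 f.cont x ε hε
  refine mem_intrinsicInterior_iff_ball.2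
    ⟨subset_affineSpan ℝ _ (intrinsicInterior_subset hx : f x ∈ N), δ, hδ,
      fun u ⟨hu, hus⟩ => hball ⟨hfδ u hu, ?_⟩⟩
  have hmap : f u ∈ (affineSpan ℝ (f ⁻¹' N)).map f.toAffineMap := ⟨u, hus, rfl⟩
  rw [AffineSubspace.map_span] at hmap
  exact affineSpan_mono ℝ (Set.image_preimage_subset f N) hmap

end IntrinsicInterior

section InnerProductSpace

variable {G H : Type*} [NormedAddCommGroup G] [InnerProductSpace ℝ G]
  [NormedAddCommGroup H] [InnerProductSpace ℝ H]

theorem convex_expFace {C : Set G} (hC : Convex ℝ C) (u : G) : Convex ℝ (expFace C u) := by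
  intro x hx y hy a b ha hb hab
  refine ⟨hC hx.1 hy.1 ha hb hab, fun w hw => ?_⟩
  rw [inner_add_right, real_inner_smul_right, real_inner_smul_right]
  calc ⟪u, w⟫ = a * ⟪u, w⟫ + b * ⟪u, w⟫ := by rw [← add_mul, hab, one_mul]
    _ ≤ a * ⟪u, x⟫ + b * ⟪u, y⟫ := by gcongr; exacts [hx.2 w hw, hy.2 w hw]

open ContinuousLinearMap in
theorem expFace_image [CompleteSpace G] [CompleteSpace H] (f : G →L[ℝ] H) (C : Set G) (u : H) :
    expFace (f '' C) u = f '' expFace C (adjoint f u) := by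
  ext x'
  constructor
  · rintro ⟨⟨x, hx, rfl⟩, hmax⟩
    refine ⟨x, ⟨hx, fun y hy => ?_⟩, rfl⟩
    simpa only [adjoint_inner_left] using hmax (f y) (Set.mem_image_of_mem f hy)
  · rintro ⟨x, ⟨hx, hmax⟩, rfl⟩
    refine ⟨Set.mem_image_of_mem f hx, Set.forall_mem_image.2 fun y hy => ?_⟩
    simpa only [adjoint_inner_left] using hmax y hy

open ContinuousLinearMap in
theorem normalCone_image [CompleteSpace G] [CompleteSpace H] (f : G →L[ℝ] H) (C : Set G)
    (x : G) :
    normalCone (f '' C) (f x) = adjoint f ⁻¹' normalCone C x := by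
  ext u
  simp only [normalCone, Set.mem_preimage, Set.mem_ofPred_eq, Set.forall_mem_image, ← map_sub,
    ← adjoint_inner_left]

end InnerProductSpace

theorem stmt_11_general (C : Set E) (hC : Convex ℝ C) (V : Submodule ℝ E)
    (v : E) (hvV : v ∈ V) (hsn : SharpNormal C v) :
    SharpNormal ((fun z : E => (Submodule.orthogonalProjection V z : E)) '' C) v := by
  set P := V.starProjection
  have hPv : P.adjoint v = v := by
    rw [(isSelfAdjoint_starProjection V).adjoint_eq]
    exact V.starProjection_eq_self_iff.2 hvV
  change SharpNormal (P '' C) v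
  intro x' hx'
  rw [expFace_image, hPv] at hx'
  obtain ⟨x, hx, rfl⟩ : x' ∈ P '' intrinsicInterior ℝ (expFace C v) :=
    intrinsicInterior_image_subset_image_intrinsicInterior (P : E →ₗ[ℝ] E).toAffineMap
      (convex_expFace hC v) hx'
  rw [normalCone_image]
  refine mem_intrinsicInterior_preimage P.adjoint.toContinuousAffineMap ?_
  show P.adjoint v ∈ _
  rw [hPv]
  exact hsn x hx

/-- If a nonzero vector `v ∈ V` is sharp normal for a convex set `C`,
then `v` is sharp normal for `π_V(C)`. -/
theorem stmt_11 (C : Set E) (hC : Convex ℝ C) (V : Submodule ℝ E)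
    (v : E) (hvV : v ∈ V) (hv : v ≠ 0) (hsn : SharpNormal C v) :
    SharpNormal ((fun z : E => (Submodule.orthogonalProjection V z : E)) '' C) v :=
  stmt_11_general C hC V v hvV hsn
end

section
/- Let C ⊆ E be a convex set and F a nonempty face of C. Then F is an exposed face of C if and only if there exists a point of ri(F) that is sharp exposed in C; moreover, if some point of ri(F) is sharp exposed in C, then every point of ri(F) is sharp exposed in C. -/
open scoped Pointwise RealInnerProductSpace

variable {E : Type*} [NormedAddCommGroup E] [InnerProductSpace ℝ E] [FiniteDimensional ℝ E]

/-!
A face is determined by any one of its relative interior points: every face of `C` that meets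
`ri F` contains `F`. Let `x ∈ ri F` and `0 ≠ u ∈ ri N(C,x)`; then `x ∈ F⊥(C,u)`, so
`F ⊆ F⊥(C,u)`. If `F = F⊥(C,v)`, then `v ∈ N(C,x)` and `u` is a proper convex combination of `v`
and another normal vector at `x`, which forces `F⊥(C,u) ⊆ F⊥(C,v) = F`; thus
`x ∈ ri F = ri F⊥(C,u)`. Conversely, let `x ∈ ri F` be sharp exposed. Either some nonzero
`u ∈ ri N(C,x)` exposes a face having `x` in its relative interior, which is then `F`, or
`ri N(C,x) = {0}`, hence `N(C,x) = {0}`: no supporting hyperplane passes through `x`, so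
`x ∈ int C` and `F = C`.
-/

section Prolong

variable {V : Type*} [AddCommGroup V] [Module ℝ V] [TopologicalSpace V]
  [IsTopologicalAddGroup V] [ContinuousSMul ℝ V]

theorem exists_prolong_mem_intrinsicInterior {S : Set V} {x z : V}
    (hx : x ∈ intrinsicInterior ℝ S) (hz : z ∈ S) :
    ∃ y ∈ intrinsicInterior ℝ S, x ∈ openSegment ℝ z y := by
  obtain ⟨x', hx', rfl⟩ := hx
  let g : ℝ → affineSpan ℝ S := fun t =>
    ⟨AffineMap.lineMap z (x' : V) t, AffineMap.lineMap_mem t (subset_affineSpan ℝ S hz) x'.2⟩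
  have hg : Continuous g := AffineMap.lineMap_continuous.subtype_mk _
  have hg1 : g 1 = x' := Subtype.ext (AffineMap.lineMap_apply_one _ _)
  obtain ⟨t, ht1, ht⟩ : ∃ t > 1, g t ∈ interior (((↑) : affineSpan ℝ S → V) ⁻¹' S) :=
    ((hg.tendsto 1).eventually (isOpen_interior.mem_nhds (hg1 ▸ hx'))).exists_gt
  refine ⟨g t, ⟨g t, ht, rfl⟩, ?_⟩
  rw [openSegment_eq_image_lineMap]
  refine ⟨t⁻¹, ⟨by positivity, inv_lt_one_of_one_lt₀ ht1⟩, ?_⟩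
  simp [g, AffineMap.lineMap_lineMap_right, inv_mul_cancel₀ (by positivity : t ≠ 0)]

end Prolong

section FiniteDimensional

variable {V : Type*} [NormedAddCommGroup V] [NormedSpace ℝ V] [FiniteDimensional ℝ V]

theorem Convex.subset_of_intrinsicInterior_subset_singleton {S : Set V} {a : V}
    (hS : Convex ℝ S) (hri : intrinsicInterior ℝ S ⊆ {a}) : S ⊆ {a} := by
  intro z hz
  obtain ⟨b, hb⟩ := Set.Nonempty.intrinsicInterior hS ⟨z, hz⟩
  obtain rfl : b = a := hri hb
  obtain ⟨y, hy, hby⟩ := exists_prolong_mem_intrinsicInterior hb hz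
  obtain rfl : y = b := hri hy
  exact right_mem_openSegment_iff.1 hby

end FiniteDimensional

section Faces

variable {V : Type*} [NormedAddCommGroup V] [InnerProductSpace ℝ V] {C F G : Set V} {x u v : V}

theorem IsExtreme.isFace (h : IsExtreme ℝ C F) (hF : Convex ℝ F) : IsFace C F :=
  ⟨hF, h.subset, fun _ hx _ hy ⟨_, hzxy, hzF⟩ =>
    ⟨h.left_mem_of_mem_openSegment hx hy hzF hzxy, h.right_mem_of_mem_openSegment hx hy hzF hzxy⟩⟩

theorem isFace_self (hC : Convex ℝ C) : IsFace C C :=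
  IsExtreme.rfl.isFace hC

theorem isExposed_expFace (C : Set V) (u : V) : IsExposed ℝ C (expFace C u) :=
  fun _ => ⟨innerSL ℝ u, rfl⟩

theorem isFace_expFace (hC : Convex ℝ C) (u : V) : IsFace C (expFace C u) :=
  (isExposed_expFace C u).isExtreme.isFace ((isExposed_expFace C u).convex hC)

theorem mem_expFace_iff_mem_normalCone : x ∈ expFace C u ↔ x ∈ C ∧ u ∈ normalCone C x := by
  simp only [expFace, normalCone, Set.mem_ofPred_eq, inner_sub_right, sub_nonpos]

theorem convex_normalCone (C : Set V) (x : V) : Convex ℝ (normalCone C x) := by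
  simp only [normalCone, Set.ofPred_forall]
  exact convex_iInter₂ fun y _ =>
    convex_halfSpace_le ((innerₛₗ ℝ).flip (y - x)).isLinear 0

theorem IsFace.subset_of_mem_intrinsicInterior_s12 (hG : IsFace C G) (hFC : F ⊆ C)
    (hx : x ∈ intrinsicInterior ℝ F) (hxG : x ∈ G) : F ⊆ G := fun z hz =>
  let ⟨y, hy, hxzy⟩ := exists_prolong_mem_intrinsicInterior hx hz
  (hG.2.2 z (hFC hz) y (hFC (intrinsicInterior_subset hy)) ⟨x, hxzy, hxG⟩).1

theorem IsFace.eq_of_mem_intrinsicInterior (hF : IsFace C F) (hG : IsFace C G)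
    (hxF : x ∈ intrinsicInterior ℝ F) (hxG : x ∈ intrinsicInterior ℝ G) : F = G :=
  (hG.subset_of_mem_intrinsicInterior_s12 hF.2.1 hxF (intrinsicInterior_subset hxG)).antisymm
    (hF.subset_of_mem_intrinsicInterior_s12 hG.2.1 hxG (intrinsicInterior_subset hxF))

theorem expFace_subset_expFace_of_mem_intrinsicInterior_normalCone (hx : x ∈ C)
    (hu : u ∈ intrinsicInterior ℝ (normalCone C x)) (hv : v ∈ normalCone C x) :
    expFace C u ⊆ expFace C v := by
  intro y hy
  obtain ⟨w, hw, a, b, ha, hb, -, rfl⟩ := exists_prolong_mem_intrinsicInterior hu hv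
  have hyx : ⟪a • v + b • w, y - x⟫ = 0 :=
    le_antisymm (intrinsicInterior_subset hu y hy.1) (by rw [inner_sub_right]; linarith [hy.2 x hx])
  have hvyx : ⟪v, y - x⟫ = 0 := by
    have hwyx : ⟪w, y - x⟫ ≤ 0 := intrinsicInterior_subset hw y hy.1
    rw [inner_add_left, real_inner_smul_left, real_inner_smul_left] at hyx
    nlinarith [hv y hy.1]
  refine mem_expFace_iff_mem_normalCone.2 ⟨hy.1, fun z hz => ?_⟩
  have hvzx := hv z hz
  rw [inner_sub_right] at hvyx hvzx ⊢
  linarith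

theorem sharpExposed_of_isExpFace (hC : Convex ℝ C) (hF : IsFace C F) (hFexp : IsExpFace C F)
    (hx : x ∈ intrinsicInterior ℝ F) : SharpExposed C x := by
  intro u hu _
  have hxC : x ∈ C := hF.2.1 (intrinsicInterior_subset hx)
  have hxu : x ∈ expFace C u :=
    mem_expFace_iff_mem_normalCone.2 ⟨hxC, intrinsicInterior_subset hu⟩
  have hFu : F ⊆ expFace C u :=
    (isFace_expFace hC u).subset_of_mem_intrinsicInterior_s12 hF.2.1 hx hxu
  have huF : expFace C u ⊆ F := by
    rcases hFexp with rfl | rfl | ⟨v, -, rfl⟩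
    · simp at hx
    · exact fun y hy => hy.1
    · exact expFace_subset_expFace_of_mem_intrinsicInterior_normalCone hxC hu
        (mem_expFace_iff_mem_normalCone.1 (intrinsicInterior_subset hx)).2
  rwa [huF.antisymm hFu]

end Faces

section Sharp

variable {C F : Set E} {x : E}

theorem mem_interior_of_normalCone_subset_zero (hC : Convex ℝ C) (hx : x ∈ C)
    (hN : normalCone C x ⊆ {0}) : x ∈ interior C := by
  by_contra hxint
  rcases (interior C).eq_empty_or_nonempty with hint | ⟨a, ha⟩
  · have hdir : (affineSpan ℝ C).direction ≠ ⊤ := by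
      rw [Ne, AffineSubspace.direction_eq_top_iff_of_nonempty ⟨x, subset_affineSpan ℝ C hx⟩,
        ← hC.interior_nonempty_iff_affineSpan_eq_top, hint]
      exact Set.not_nonempty_empty
    obtain ⟨u, hu, hu0⟩ := Submodule.exists_mem_ne_zero_of_ne_bot
      (mt Submodule.orthogonal_eq_bot_iff.1 hdir)
    refine hu0 (hN fun y hy => le_of_eq ?_)
    rw [real_inner_comm]
    exact Submodule.inner_right_of_mem_orthogonal (AffineSubspace.vsub_mem_direction
      (subset_affineSpan ℝ C hy) (subset_affineSpan ℝ C hx)) hu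
  · obtain ⟨f, hf⟩ := geometric_hahn_banach_open_point hC.interior isOpen_interior hxint
    have hCf : C ⊆ {y | f y ≤ f x} := by
      refine subset_closure.trans ?_
      rw [← hC.closure_interior_eq_closure_of_nonempty_interior ⟨a, ha⟩]
      exact closure_minimal (fun y hy => (hf y hy).le) (isClosed_le f.continuous continuous_const)
    have hf0 : (InnerProductSpace.toDual ℝ E).symm f ≠ 0 := by
      intro h0
      obtain rfl : f = 0 := (map_eq_zero_iff _ (LinearIsometryEquiv.injective _)).1 h0
      exact (hf a ha).false
    refine hf0 (hN fun y hy => ?_)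
    rw [InnerProductSpace.toDual_symm_apply, map_sub, sub_nonpos]
    exact hCf hy

theorem isExpFace_of_sharpExposed (hC : Convex ℝ C) (hF : IsFace C F)
    (hx : x ∈ intrinsicInterior ℝ F) (hsharp : SharpExposed C x) : IsExpFace C F := by
  by_cases h : ∃ u ∈ intrinsicInterior ℝ (normalCone C x), u ≠ 0
  · obtain ⟨u, hu, hu0⟩ := h
    exact Or.inr (Or.inr ⟨u, hu0,
      hF.eq_of_mem_intrinsicInterior (isFace_expFace hC u) hx (hsharp u hu hu0)⟩)
  · push Not at h
    have hxC : x ∈ C := hF.2.1 (intrinsicInterior_subset hx)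
    have hxint : x ∈ interior C := mem_interior_of_normalCone_subset_zero hC hxC
      ((convex_normalCone C x).subset_of_intrinsicInterior_subset_singleton h)
    exact Or.inr (Or.inl (hF.eq_of_mem_intrinsicInterior (isFace_self hC) hx
      (interior_subset_intrinsicInterior hxint)))

end Sharp

/-- A nonempty face `F` of a convex set `C` is exposed iff some point of
`ri(F)` is sharp exposed in `C`; and if some point of `ri(F)` is sharp exposed then all
points of `ri(F)` are sharp exposed in `C`. -/
theorem stmt_12 (C : Set E) (hC : Convex ℝ C) (F : Set E) (hF : IsFace C F)
    (hne : F.Nonempty) :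
    (IsExpFace C F ↔ ∃ x ∈ intrinsicInterior ℝ F, SharpExposed C x) ∧
    ((∃ x ∈ intrinsicInterior ℝ F, SharpExposed C x) →
      ∀ x ∈ intrinsicInterior ℝ F, SharpExposed C x) := by
  have hexp_iff : IsExpFace C F ↔ ∃ x ∈ intrinsicInterior ℝ F, SharpExposed C x := by
    refine ⟨fun hexp => ?_, fun ⟨x, hx, hsharp⟩ => isExpFace_of_sharpExposed hC hF hx hsharp⟩
    obtain ⟨x, hx⟩ := hne.intrinsicInterior hF.1
    exact ⟨x, hx, sharpExposed_of_isExpFace hC hF hexp hx⟩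
  exact ⟨hexp_iff, fun h _ hx => sharpExposed_of_isExpFace hC hF (hexp_iff.2 h) hx⟩
end

section
/- Let C ⊆ E be a convex set, A ⊆ E an affine subspace, and x ∈ C ∩ A. If F(C,x) is an exposed face of C, then F(C∩A,x) is an exposed face of C ∩ A. -/
open scoped Pointwise RealInnerProductSpace

variable {E : Type*} [NormedAddCommGroup E] [InnerProductSpace ℝ E] [FiniteDimensional ℝ E]

/-!
If `x ∈ ri F`, every segment from a point `y ∈ F` to `x` can be prolonged beyond `x` inside `F`,
and the prolongation stays in `A` when `y, x ∈ A`. Since faces absorb open segments, this gives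
`F(C ∩ A, x) = F(C, x) ∩ A`. If `u` exposes `F(C, x)`, then `⟪u, ·⟫` attains its maximum over `C`
at `x ∈ C ∩ A`, so `u` also exposes `F(C, x) ∩ A` in `C ∩ A`.
-/

open AffineMap Filter Topology in
theorem exists_one_lt_lineMap_mem_of_mem_intrinsicInterior {V : Type*} [NormedAddCommGroup V]
    [NormedSpace ℝ V] {F : Set V} {x y : V} (hx : x ∈ intrinsicInterior ℝ F) (hy : y ∈ F) :
    ∃ t : ℝ, 1 < t ∧ lineMap y x t ∈ F := by
  obtain ⟨x', hx', rfl⟩ := mem_intrinsicInterior.1 hx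
  let φ : ℝ → affineSpan ℝ F := fun t =>
    ⟨lineMap y x' t, AffineMap.lineMap_mem t (subset_affineSpan ℝ F hy) x'.2⟩
  have hφ : Continuous φ := lineMap_continuous.subtype_mk _
  have hφ1 : φ 1 = x' := Subtype.ext (lineMap_apply_one _ _)
  have hnear : ∀ᶠ t in 𝓝 (1 : ℝ), φ t ∈ interior ((↑) ⁻¹' F) :=
    hφ.continuousAt.preimage_mem_nhds (hφ1 ▸ isOpen_interior.mem_nhds hx')
  obtain ⟨t, ht, ht1⟩ := ((hnear.filter_mono nhdsWithin_le_nhds).and self_mem_nhdsWithin).exists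
    (f := 𝓝[>] (1 : ℝ))
  exact ⟨t, ht1, (interior_subset ht : φ t ∈ ((↑) ⁻¹' F : Set (affineSpan ℝ F)))⟩

open AffineMap in
theorem mem_openSegment_lineMap_of_one_lt {V : Type*} [AddCommGroup V] [Module ℝ V] (x y : V)
    {t : ℝ} (ht : 1 < t) : x ∈ openSegment ℝ y (lineMap y x t) := by
  have hx : lineMap y (lineMap y x t) t⁻¹ = x := by
    rw [← homothety_eq_lineMap, ← homothety_eq_lineMap, ← homothety_mul_apply,
      inv_mul_cancel₀ (by positivity), homothety_one, coe_id, _root_.id]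
  simpa only [hx] using
    lineMap_mem_openSegment ℝ y (lineMap y x t) ⟨by positivity, inv_lt_one_of_one_lt₀ ht⟩

theorem IsFace.inter_affineSubspace_subset {V : Type*} [NormedAddCommGroup V]
    [InnerProductSpace ℝ V] {C F G : Set V} {A : AffineSubspace ℝ V} {x : V}
    (hF : IsFace C F) (hGC : G ∩ A ⊆ C) (hxG : x ∈ intrinsicInterior ℝ G) (hxA : x ∈ A)
    (hxF : x ∈ F) : G ∩ A ⊆ F := by
  rintro y ⟨hyG, hyA⟩
  obtain ⟨t, ht, hzG⟩ := exists_one_lt_lineMap_mem_of_mem_intrinsicInterior hxG hyG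
  have hzA : AffineMap.lineMap y x t ∈ A := AffineMap.lineMap_mem t hyA hxA
  exact (hF.2.2 y (hGC ⟨hyG, hyA⟩) _ (hGC ⟨hzG, hzA⟩)
    ⟨x, mem_openSegment_lineMap_of_one_lt x y ht, hxF⟩).1

theorem expFace_inter_eq_of_nonempty {V : Type*} [NormedAddCommGroup V] [InnerProductSpace ℝ V]
    {C S : Set V} {u : V} (h : (expFace C u ∩ S).Nonempty) :
    expFace C u ∩ S = expFace (C ∩ S) u := by
  obtain ⟨x, hx, hxS⟩ := h
  ext y
  constructor
  · rintro ⟨⟨hyC, hy⟩, hyS⟩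
    exact ⟨⟨hyC, hyS⟩, fun z hz => hy z hz.1⟩
  · rintro ⟨⟨hyC, hyS⟩, hy⟩
    exact ⟨⟨hyC, fun z hz => (hx.2 z hz).trans (hy x ⟨hx.1, hxS⟩)⟩, hyS⟩

theorem stmt_13_general (C : Set E) (A : AffineSubspace ℝ E) (x : E)
    (hx : x ∈ C ∩ (A : Set E))
    (F : Set E) (hF : IsFace C F) (hxF : x ∈ intrinsicInterior ℝ F)
    (hFexp : IsExpFace C F)
    (G : Set E) (hG : IsFace (C ∩ (A : Set E)) G) (hxG : x ∈ intrinsicInterior ℝ G) :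
    IsExpFace (C ∩ (A : Set E)) G := by
  have hxF' : x ∈ F := intrinsicInterior_subset hxF
  have hGF : G = F ∩ A := by
    refine Set.Subset.antisymm (fun y hy => ⟨?_, (hG.2.1 hy).2⟩) ?_
    · exact hF.inter_affineSubspace_subset (fun z hz => (hG.2.1 hz.1).1) hxG hx.2 hxF'
        ⟨hy, (hG.2.1 hy).2⟩
    · exact hG.inter_affineSubspace_subset (Set.inter_subset_inter_left _ hF.2.1) hxF hx.2
        (intrinsicInterior_subset hxG)
  subst hGF
  rcases hFexp with rfl | rfl | ⟨u, hu, rfl⟩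
  · exact absurd hxF' (Set.notMem_empty x)
  · exact Or.inr (Or.inl rfl)
  · exact Or.inr (Or.inr ⟨u, hu, expFace_inter_eq_of_nonempty ⟨x, hxF', hx.2⟩⟩)

/-- For convex `C`, an affine subspace `A`, and `x ∈ C ∩ A`: if the face
`F(C,x)` of `C` with `x` in its relative interior is an exposed face of `C`, then the face
`F(C∩A,x)` of `C ∩ A` with `x` in its relative interior is an exposed face of `C ∩ A`. -/
theorem stmt_13 (C : Set E) (hC : Convex ℝ C) (A : AffineSubspace ℝ E) (x : E)
    (hx : x ∈ C ∩ (A : Set E))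
    (F : Set E) (hF : IsFace C F) (hxF : x ∈ intrinsicInterior ℝ F)
    (hFexp : IsExpFace C F)
    (G : Set E) (hG : IsFace (C ∩ (A : Set E)) G) (hxG : x ∈ intrinsicInterior ℝ G) :
    IsExpFace (C ∩ (A : Set E)) G :=
  stmt_13_general C A x hx F hF hxF hFexp G hG hxG
end
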